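/- arXiv:1503.02154 — 5 statements merged into one kernel-verified Lean document; each statement's English description precedes it below -/
import Mathlib

section
/- Let F : ℝ^n → ℝ be a polynomial eigenfunction of the Ornstein–Uhlenbeck operator with ℒF = -kF (k ≥ 1 an integer) which is also a homogeneous polynomial of degree k. Then sup_{u ∈ S^{n-1}} |F(u)| ≤ (1/√(k!)) · (∫_{ℝ^n} F² dγ_n)^{1/2}. -/
open MeasureTheory MvPolynomial

/-- The standard Gaussian measure on `ℝ^n` (as `Fin n → ℝ`). -/
noncomputable def stdGaussian (n : ℕ) : Measure (Fin n → ℝ) :=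
  Measure.pi fun _ => ProbabilityTheory.gaussianReal 0 1

/-- The Ornstein–Uhlenbeck generator `ℒf = Δf - ⟨x, ∇f⟩` acting on polynomials. -/
noncomputable def OU (n : ℕ) (P : MvPolynomial (Fin n) ℝ) : MvPolynomial (Fin n) ℝ :=
  ∑ i : Fin n, (pderiv i (pderiv i P) - X i * pderiv i P)

/-!
Fix a unit vector `u`, let `D_u` be the derivative in direction `u` and `h_m = He_m(⟨u, x⟩)`, so
`h_0 = 1` and `h_{m+1} = ⟨u, x⟩ h_m - D_u h_m`. Gaussian integration by parts,
`∫ ∂ᵢP dγ = ∫ xᵢ P dγ`, gives `∫ P h_{m+1} dγ = ∫ (D_u P) h_m dγ`. Since `[D_u, ⟨u, x⟩] = 1` we get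
`D_u h_{m+1} = (m + 1) h_m`, hence `∫ h_k² dγ = k!`; and for `F` homogeneous of degree `k`, Euler's
identity `(D_u F)(u) = k F(u)` gives `∫ F h_k dγ = k! F(u)`. Expanding
`0 ≤ ∫ (F - F(u) h_k)² dγ` yields `k! F(u)² ≤ ∫ F² dγ`.
-/

open ProbabilityTheory hiding stdGaussian
open scoped NNReal Nat

lemma integrable_pow_gaussianReal (μ : ℝ) (v : ℝ≥0) (p : ℕ) :
    Integrable (fun x => x ^ p) (gaussianReal μ v) := by
  have h := (memLp_id_gaussianReal (μ := μ) (v := v) p).integrable_norm_pow'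
  exact (integrable_norm_iff (by fun_prop)).mp (by simpa only [id, norm_pow] using h)

lemma integrable_gaussianPDFReal_mul_iff {μ : ℝ} {v : ℝ≥0} (hv : v ≠ 0) {f : ℝ → ℝ} :
    Integrable (fun x => gaussianPDFReal μ v x * f x) ↔ Integrable f (gaussianReal μ v) := by
  rw [gaussianReal_of_var_ne_zero μ hv, integrable_withDensity_iff_integrable_smul'
    (measurable_gaussianPDF μ v) (ae_of_all _ fun _ => gaussianPDF_lt_top)]
  simp only [gaussianPDF, ENNReal.toReal_ofReal (gaussianPDFReal_nonneg μ v _), smul_eq_mul]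

lemma hasDerivAt_gaussianPDFReal (μ : ℝ) (v : ℝ≥0) (x : ℝ) :
    HasDerivAt (gaussianPDFReal μ v) (-(x - μ) / v * gaussianPDFReal μ v x) x := by
  have h := (((hasDerivAt_id' x).sub_const μ).fun_pow 2).fun_neg.div_const (2 * (v : ℝ))
    |>.exp.const_mul (Real.sqrt (2 * Real.pi * v))⁻¹
  rw [gaussianPDFReal_def]
  refine h.congr_deriv ?_
  rcases eq_or_ne (v : ℝ) 0 with hv | hv
  · simp [hv]
  · field_simp
    ring

-- For `a = 0` this says that the standard Gaussian is centred.
lemma integral_pow_succ_gaussianReal (a : ℕ) :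
    ∫ x, x ^ (a + 1) ∂gaussianReal 0 1 = a * ∫ x, x ^ (a - 1) ∂gaussianReal 0 1 := by
  set ρ := gaussianPDFReal 0 1
  have hint (p : ℕ) : Integrable (fun x => ρ x * x ^ p) :=
    (integrable_gaussianPDFReal_mul_iff one_ne_zero).2 (integrable_pow_gaussianReal 0 1 p)
  have hderiv (x : ℝ) :
      HasDerivAt (fun x => ρ x * x ^ a) (a * (ρ x * x ^ (a - 1)) - ρ x * x ^ (a + 1)) x := by
    refine ((hasDerivAt_gaussianPDFReal 0 1 x).fun_mul (hasDerivAt_pow a x)).congr_deriv ?_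
    simp only [sub_zero, NNReal.coe_one, div_one]
    ring
  have h := integral_eq_zero_of_hasDerivAt_of_integrable hderiv
    (((hint _).const_mul _).sub (hint _)) (hint a)
  rw [integral_sub ((hint _).const_mul _) (hint _), integral_const_mul, sub_eq_zero] at h
  simp only [integral_gaussianReal_eq_integral_smul one_ne_zero, smul_eq_mul]
  exact h.symm

section StdGaussian

variable {n : ℕ}

lemma eval_monomial_eq_prod (x : Fin n → ℝ) (d : Fin n →₀ ℕ) (c : ℝ) :
    eval x (monomial d c) = c * ∏ i, x i ^ d i := by
  rw [eval_monomial, Finsupp.prod_fintype _ _ fun i => pow_zero (x i)]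

lemma integrable_eval_stdGaussian (P : MvPolynomial (Fin n) ℝ) :
    Integrable (fun x => eval x P) (stdGaussian n) := by
  induction P using MvPolynomial.induction_on' with
  | monomial d c =>
    simp only [eval_monomial_eq_prod]
    exact (Integrable.fintype_prod fun i => integrable_pow_gaussianReal 0 1 (d i)).const_mul c
  | add P Q hP hQ => simp only [map_add]; exact hP.add hQ

variable (n) in
noncomputable def stdGaussianIntegral : MvPolynomial (Fin n) ℝ →ₗ[ℝ] ℝ where
  toFun P := ∫ x, eval x P ∂stdGaussian n
  map_add' P Q := by
    simp only [map_add]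
    exact integral_add (integrable_eval_stdGaussian P) (integrable_eval_stdGaussian Q)
  map_smul' c P := by
    simp only [smul_eval, RingHom.id_apply, smul_eq_mul]
    exact integral_const_mul c _

lemma stdGaussianIntegral_apply (P : MvPolynomial (Fin n) ℝ) :
    stdGaussianIntegral n P = ∫ x, eval x P ∂stdGaussian n := rfl

lemma stdGaussianIntegral_monomial (d : Fin n →₀ ℕ) (c : ℝ) :
    stdGaussianIntegral n (monomial d c) = c * ∏ i, ∫ t, t ^ d i ∂gaussianReal 0 1 := by
  simp only [stdGaussianIntegral_apply, eval_monomial_eq_prod]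
  rw [integral_const_mul, stdGaussian, integral_fintype_prod_eq_prod (fun i t => t ^ d i)]

lemma stdGaussianIntegral_C (c : ℝ) : stdGaussianIntegral n (C c) = c := by
  simp [stdGaussianIntegral_apply, stdGaussian]

lemma stdGaussianIntegral_mul_self_nonneg (P : MvPolynomial (Fin n) ℝ) :
    0 ≤ stdGaussianIntegral n (P * P) :=
  integral_nonneg fun x => show 0 ≤ eval x (P * P) by rw [map_mul]; exact mul_self_nonneg _

lemma stdGaussianIntegral_pderiv (i : Fin n) (P : MvPolynomial (Fin n) ℝ) :
    stdGaussianIntegral n (pderiv i P) = stdGaussianIntegral n (X i * P) := by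
  induction P using MvPolynomial.induction_on' with
  | monomial d c =>
    rw [pderiv_monomial, X, monomial_mul, one_mul, stdGaussianIntegral_monomial,
      stdGaussianIntegral_monomial, Fintype.prod_eq_mul_prod_compl i,
      Fintype.prod_eq_mul_prod_compl i]
    have hrest : ∀ j ∈ ({i}ᶜ : Finset (Fin n)),
        (d - Finsupp.single i 1 : Fin n →₀ ℕ) j = (Finsupp.single i 1 + d : Fin n →₀ ℕ) j := by
      intro j hj
      have hij : i ≠ j := fun h => by simp [h] at hj
      simp [hij]
    rw [Finset.prod_congr rfl fun j hj =>
      congrArg (fun e => ∫ t, t ^ e ∂gaussianReal 0 1) (hrest j hj)]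
    simp only [Finsupp.tsub_apply, Finsupp.add_apply, Finsupp.single_eq_same]
    rw [add_comm 1, integral_pow_succ_gaussianReal]
    ring
  | add P Q hP hQ => simp only [map_add, mul_add, hP, hQ]

end StdGaussian

section Directional

variable {n : ℕ} (u : Fin n → ℝ)

noncomputable def dirDeriv : Derivation ℝ (MvPolynomial (Fin n) ℝ) (MvPolynomial (Fin n) ℝ) :=
  ∑ i, u i • pderiv i

noncomputable def linearForm : MvPolynomial (Fin n) ℝ := ∑ i, C (u i) * X i

lemma dirDeriv_apply (P : MvPolynomial (Fin n) ℝ) : dirDeriv u P = ∑ i, u i • pderiv i P := by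
  change Derivation.coeFnAddMonoidHom (∑ i, u i • pderiv i) P = _
  rw [map_sum, Finset.sum_apply]
  rfl

lemma dirDeriv_linearForm (hu : ∑ i, u i ^ 2 = 1) : dirDeriv u (linearForm u) = 1 := by
  have hpderiv (i : Fin n) : pderiv i (linearForm u) = C (u i) := by
    simp [linearForm, pderiv_X, Pi.single_apply]
  simp only [dirDeriv_apply, hpderiv, smul_eq_C_mul, ← sq, ← map_pow]
  rw [← map_sum, hu, C_1]

lemma dirDeriv_linearForm_mul (hu : ∑ i, u i ^ 2 = 1) (Q : MvPolynomial (Fin n) ℝ) :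
    dirDeriv u (linearForm u * Q) = Q + linearForm u * dirDeriv u Q := by
  rw [Derivation.leibniz, dirDeriv_linearForm u hu, smul_eq_mul, smul_eq_mul, mul_one, add_comm]

lemma eval_dirDeriv_of_isHomogeneous {P : MvPolynomial (Fin n) ℝ} {m : ℕ}
    (hP : P.IsHomogeneous m) : eval u (dirDeriv u P) = m * eval u P := by
  have h := congrArg (eval u) hP.sum_X_mul_pderiv
  simpa [dirDeriv_apply, smul_eval] using h

lemma isHomogeneous_dirDeriv {P : MvPolynomial (Fin n) ℝ} {m : ℕ} (hP : P.IsHomogeneous m) :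
    (dirDeriv u P).IsHomogeneous (m - 1) := by
  rw [dirDeriv_apply]
  exact IsHomogeneous.sum _ _ _ fun i _ => by
    rw [smul_eq_C_mul]
    exact (IsHomogeneous.pderiv hP).C_mul (u i)

lemma stdGaussianIntegral_dirDeriv (P : MvPolynomial (Fin n) ℝ) :
    stdGaussianIntegral n (dirDeriv u P) = stdGaussianIntegral n (linearForm u * P) := by
  simp only [dirDeriv_apply, linearForm, Finset.sum_mul, ← smul_eq_C_mul, smul_mul_assoc, map_sum,
    map_smul, stdGaussianIntegral_pderiv]

lemma stdGaussianIntegral_mul_sub_dirDeriv (P Q : MvPolynomial (Fin n) ℝ) :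
    stdGaussianIntegral n (P * (linearForm u * Q - dirDeriv u Q)) =
      stdGaussianIntegral n (dirDeriv u P * Q) := by
  have h := stdGaussianIntegral_dirDeriv u (P * Q)
  rw [Derivation.leibniz, smul_eq_mul, smul_eq_mul, map_add] at h
  rw [mul_sub, map_sub, mul_left_comm, ← h, mul_comm Q]
  ring

end Directional

section Hermite

variable {n : ℕ} (u : Fin n → ℝ)

noncomputable def hermiteDir : ℕ → MvPolynomial (Fin n) ℝ
  | 0 => 1
  | m + 1 => linearForm u * hermiteDir m - dirDeriv u (hermiteDir m)

lemma hermiteDir_zero : hermiteDir u 0 = 1 := rfl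

lemma hermiteDir_succ (m : ℕ) :
    hermiteDir u (m + 1) = linearForm u * hermiteDir u m - dirDeriv u (hermiteDir u m) := rfl

lemma dirDeriv_hermiteDir_succ (hu : ∑ i, u i ^ 2 = 1) (m : ℕ) :
    dirDeriv u (hermiteDir u (m + 1)) = ((m : ℝ) + 1) • hermiteDir u m := by
  induction m with
  | zero => simp [hermiteDir_succ, hermiteDir_zero, dirDeriv_linearForm u hu]
  | succ m ih =>
    rw [hermiteDir_succ u (m + 1), map_sub, dirDeriv_linearForm_mul u hu, ih, Derivation.map_smul,
      mul_smul_comm, add_sub_assoc, ← smul_sub, ← hermiteDir_succ]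
    push_cast
    module

lemma stdGaussianIntegral_mul_hermiteDir_succ (P : MvPolynomial (Fin n) ℝ) (m : ℕ) :
    stdGaussianIntegral n (P * hermiteDir u (m + 1)) =
      stdGaussianIntegral n (dirDeriv u P * hermiteDir u m) :=
  stdGaussianIntegral_mul_sub_dirDeriv u P (hermiteDir u m)

lemma stdGaussianIntegral_hermiteDir_mul_self (hu : ∑ i, u i ^ 2 = 1) (m : ℕ) :
    stdGaussianIntegral n (hermiteDir u m * hermiteDir u m) = m ! := by
  induction m with
  | zero =>
    rw [hermiteDir_zero, mul_one, ← C_1, stdGaussianIntegral_C, Nat.factorial_zero, Nat.cast_one]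
  | succ m ih =>
    rw [stdGaussianIntegral_mul_hermiteDir_succ, dirDeriv_hermiteDir_succ u hu, smul_mul_assoc,
      map_smul, ih, Nat.factorial_succ]
    push_cast
    ring

lemma stdGaussianIntegral_mul_hermiteDir_of_isHomogeneous {P : MvPolynomial (Fin n) ℝ} {m : ℕ}
    (hP : P.IsHomogeneous m) : stdGaussianIntegral n (P * hermiteDir u m) = m ! * eval u P := by
  induction m generalizing P with
  | zero =>
    obtain ⟨c, rfl⟩ : ∃ c, P = C c :=
      ⟨_, totalDegree_eq_zero_iff_eq_C.1 ((totalDegree_zero_iff_isHomogeneous _).2 hP)⟩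
    simp [hermiteDir_zero, stdGaussianIntegral_C]
  | succ m ih =>
    rw [stdGaussianIntegral_mul_hermiteDir_succ, ih (isHomogeneous_dirDeriv u hP),
      eval_dirDeriv_of_isHomogeneous u hP, Nat.factorial_succ]
    push_cast
    ring

lemma factorial_mul_eval_sq_le_integral_sq {P : MvPolynomial (Fin n) ℝ} {m : ℕ}
    (hu : ∑ i, u i ^ 2 = 1) (hP : P.IsHomogeneous m) :
    m ! * eval u P ^ 2 ≤ ∫ x, eval x P ^ 2 ∂stdGaussian n := by
  set t := eval u P
  set h := hermiteDir u m
  have hexpand : (P - t • h) * (P - t • h) = P * P - (2 * t) • (P * h) + t ^ 2 • (h * h) := by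
    simp only [smul_eq_C_mul, map_mul, map_pow, map_ofNat]
    ring
  have hsq := stdGaussianIntegral_mul_self_nonneg (P - t • h)
  rw [hexpand, map_add, map_sub, map_smul, map_smul, smul_eq_mul, smul_eq_mul,
    stdGaussianIntegral_mul_hermiteDir_of_isHomogeneous u hP,
    stdGaussianIntegral_hermiteDir_mul_self u hu] at hsq
  have hint : stdGaussianIntegral n (P * P) = ∫ x, eval x P ^ 2 ∂stdGaussian n := by
    simp only [stdGaussianIntegral_apply, map_mul, sq]
  linarith

end Hermite

lemma abs_le_inv_sqrt_mul_sqrt {a b t : ℝ} (ha : 0 < a) (h : a * t ^ 2 ≤ b) :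
    |t| ≤ (√a)⁻¹ * √b := by
  rw [← Real.sqrt_inv, ← Real.sqrt_mul (inv_nonneg.2 ha.le)]
  exact Real.abs_le_sqrt (by rw [inv_mul_eq_div, le_div_iff₀ ha]; linarith)

theorem sup_sphere_le_of_ou_eigenfunction_general
    (n k : ℕ) (F : MvPolynomial (Fin n) ℝ)
    (hhom : F.IsHomogeneous k) :
    ∀ u : Fin n → ℝ, ∑ i, u i ^ 2 = 1 →
      |eval u F| ≤ (Real.sqrt (Nat.factorial k))⁻¹ *
        Real.sqrt (∫ x, (eval x F) ^ 2 ∂(stdGaussian n)) :=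
  fun u hu =>
    abs_le_inv_sqrt_mul_sqrt (by positivity) (factorial_mul_eval_sq_le_integral_sq u hu hhom)

/-- If `F` is a homogeneous polynomial of degree `k` with `ℒF = -kF`, then
`sup_{u ∈ S^{n-1}} |F(u)| ≤ (k!)^{-1/2} (∫ F² dγₙ)^{1/2}`. -/
theorem sup_sphere_le_of_ou_eigenfunction
    (n k : ℕ) (hk : 1 ≤ k) (F : MvPolynomial (Fin n) ℝ)
    (heig : OU n F = (-(k : ℝ)) • F) (hhom : F.IsHomogeneous k) :
    ∀ u : Fin n → ℝ, ∑ i, u i ^ 2 = 1 →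
      |eval u F| ≤ (Real.sqrt (Nat.factorial k))⁻¹ *
        Real.sqrt (∫ x, (eval x F) ^ 2 ∂(stdGaussian n)) :=
  sup_sphere_le_of_ou_eigenfunction_general n k F hhom
end

section
/- Assuming which for all integers q ≥ 1 and every centered Gaussian vector (G_1,...,G_d) with unit variances one has E[G_1^{2q}⋯G_d^{2q}] ≥ ∏_i E[G_i^{2q}], then for any d ≥ 2 and any unit vectors x_1,...,x_d ∈ ℝ^d there exists a unit vector v ∈ ℝ^d with |⟨v,x_1⟩ ⋯ ⟨v,x_d⟩| ≥ d^{-d/2}. -/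
open MeasureTheory

/-!
Let `v` maximize `M = |⟨v,x₁⟩ ⋯ ⟨v,x_d⟩|` on the unit sphere. By homogeneity,
`∏ ⟨xᵢ,g⟩^{2q} ≤ M^{2q} |g|^{2qd}` for every `g`. Each `⟨xᵢ,g⟩` is a standard Gaussian when `g`
is, so integrating and using the hypothesis gives
`((2q-1)‼)^d = ∏ E⟨xᵢ,g⟩^{2q} ≤ M^{2q} E|g|^{2qd}`. Expanding `|g|^{2k}` by the multinomial
theorem yields `E|g|^{2k} ≤ (k+1)^d 2^k k!`, and `(qd)! ≤ d^{qd} (q!)^d`; together these give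
`1 ≤ C q^{2d} (M² d^d)^q` for all `q ≥ 1`, which forces `M² d^d ≥ 1`.
-/

open Finset Filter Topology
open scoped Nat

theorem Nat.doubleFactorial_le_doubleFactorial_succ : ∀ n : ℕ, n‼ ≤ (n + 1)‼
  | 0 => le_rfl
  | 1 => by decide
  | n + 2 => by
    rw [Nat.doubleFactorial_add_two, Nat.doubleFactorial_add_two (n + 1)]
    exact Nat.mul_le_mul (by omega) (Nat.doubleFactorial_le_doubleFactorial_succ n)

theorem Nat.doubleFactorial_sub_one_le : ∀ n : ℕ, (n - 1)‼ ≤ n‼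
  | 0 => le_rfl
  | n + 1 => Nat.doubleFactorial_le_doubleFactorial_succ n

theorem Nat.doubleFactorial_succ_le (n : ℕ) : (n + 1)‼ ≤ (n + 1) * n‼ := by
  rw [Nat.doubleFactorial_add_one]
  exact Nat.mul_le_mul_left _ (Nat.doubleFactorial_sub_one_le n)

theorem Nat.multinomial_univ_le_card_pow {ι : Type*} [Fintype ι] [DecidableEq ι] (f : ι → ℕ) :
    Nat.multinomial univ f ≤ Fintype.card ι ^ ∑ i, f i := by
  have h := sum_pow_eq_sum_piAntidiag (univ : Finset ι) (fun _ => (1 : ℕ)) (∑ i, f i)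
  simp only [one_pow, prod_const_one, mul_one, sum_const, smul_eq_mul, Finset.card_univ] at h
  rw [h]
  exact single_le_sum (f := fun a => Nat.multinomial univ a) (fun _ _ => Nat.zero_le _)
    (by simp)

theorem Nat.factorial_mul_le_pow_mul_factorial_pow (q d : ℕ) : (q * d)! ≤ d ^ (q * d) * q ! ^ d := by
  have h := Nat.multinomial_spec (univ : Finset (Fin d)) (fun _ => q)
  have hle := Nat.multinomial_univ_le_card_pow (fun _ : Fin d => q)
  simp only [prod_const, Finset.card_univ, Fintype.card_fin, sum_const, smul_eq_mul] at h hle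
  rw [mul_comm d q] at h hle
  rw [← h, mul_comm]
  gcongr

theorem Nat.two_pow_mul_mul_factorial_le {q : ℕ} (hq : 1 ≤ q) (d : ℕ) :
    2 ^ (q * d) * (q * d)! ≤ d ^ (q * d) * (2 * q) ^ d * ((2 * q - 1)‼) ^ d :=
  calc 2 ^ (q * d) * (q * d)! ≤ 2 ^ (q * d) * (d ^ (q * d) * q ! ^ d) :=
        Nat.mul_le_mul_left _ (Nat.factorial_mul_le_pow_mul_factorial_pow q d)
    _ = d ^ (q * d) * ((2 * q)‼) ^ d := by rw [Nat.doubleFactorial_two_mul, pow_mul]; ring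
    _ ≤ d ^ (q * d) * (2 * q * (2 * q - 1)‼) ^ d := by
        gcongr
        simpa [show 2 * q - 1 + 1 = 2 * q by omega] using Nat.doubleFactorial_succ_le (2 * q - 1)
    _ = d ^ (q * d) * (2 * q) ^ d * ((2 * q - 1)‼) ^ d := by ring

theorem Nat.multinomial_mul_prod_doubleFactorial_le {ι : Type*} [Fintype ι] (a : ι → ℕ) :
    Nat.multinomial univ a * ∏ i, (2 * a i - 1)‼ ≤ 2 ^ (∑ i, a i) * (∑ i, a i)! :=
  calc Nat.multinomial univ a * ∏ i, (2 * a i - 1)‼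
      ≤ Nat.multinomial univ a * ∏ i, (2 * a i)‼ := by
        gcongr with i
        exact Nat.doubleFactorial_sub_one_le _
    _ = 2 ^ (∑ i, a i) * (∑ i, a i)! := by
        rw [← Nat.multinomial_spec, ← prod_pow_eq_pow_sum]
        simp_rw [Nat.doubleFactorial_two_mul, prod_mul_distrib]
        ring

theorem Finset.card_piAntidiag_univ_le {ι : Type*} [Fintype ι] [DecidableEq ι] (k : ℕ) :
    #(piAntidiag (univ : Finset ι) k) ≤ (k + 1) ^ Fintype.card ι := by
  calc #(piAntidiag (univ : Finset ι) k)
      ≤ #(Fintype.piFinset fun _ : ι => range (k + 1)) := by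
        refine card_le_card fun a ha => Fintype.mem_piFinset.2 fun j => mem_range.2 ?_
        rw [mem_piAntidiag] at ha
        exact Nat.lt_succ_of_le (ha.1 ▸ single_le_sum (fun _ _ => Nat.zero_le _) (mem_univ j))
    _ = (k + 1) ^ Fintype.card ι := by simp

lemma one_le_of_forall_one_le_mul_pow_mul_pow {s C : ℝ} {n : ℕ} (hs : 0 ≤ s)
    (h : ∀ q : ℕ, 1 ≤ q → 1 ≤ C * q ^ n * s ^ q) : 1 ≤ s := by
  by_contra! hlt
  have hlim : Tendsto (fun q : ℕ => C * ((q : ℝ) ^ n * s ^ q)) atTop (𝓝 0) := by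
    simpa using (tendsto_pow_const_mul_const_pow_of_abs_lt_one n
      (by rwa [abs_of_nonneg hs])).const_mul C
  obtain ⟨q, hsmall, hq⟩ := ((hlim.eventually (gt_mem_nhds one_pos)).and
    (eventually_ge_atTop 1)).exists
  linarith [h q hq, mul_assoc C ((q : ℝ) ^ n) (s ^ q)]

lemma rpow_neg_div_two_le_of_one_le_sq_mul {d : ℕ} (hd : 0 < d) {M : ℝ} (hM : 0 ≤ M)
    (h : 1 ≤ M ^ 2 * d ^ d) : (d : ℝ) ^ (-(d : ℝ) / 2) ≤ M := by
  have hd' : (0 : ℝ) < d := by exact_mod_cast hd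
  rw [← pow_le_pow_iff_left₀ (by positivity) hM two_ne_zero, ← Real.rpow_natCast,
    ← Real.rpow_mul hd'.le, show -(d : ℝ) / 2 * (2 : ℕ) = -(d : ℕ) by push_cast; ring,
    Real.rpow_neg hd'.le, Real.rpow_natCast, inv_le_iff_one_le_mul₀ (by positivity)]
  exact h

lemma isCompact_setOf_sum_sq_eq_one (κ : Type*) [Fintype κ] :
    IsCompact {v : κ → ℝ | ∑ j, v j ^ 2 = 1} := by
  refine Metric.isCompact_of_isClosed_isBounded (isClosed_eq (by fun_prop) continuous_const) ?_
  refine (Metric.isBounded_closedBall (x := 0) (r := 1)).subset fun v hv => ?_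
  rw [mem_closedBall_zero_iff, pi_norm_le_iff_of_nonneg zero_le_one]
  intro j
  rw [Real.norm_eq_abs, ← sq_le_one_iff_abs_le_one]
  exact hv ▸ single_le_sum (f := fun j => v j ^ 2) (fun _ _ => sq_nonneg _) (mem_univ j)

lemma sq_prod_sum_mul_le_of_isMaxOn {ι κ : Type*} [Fintype ι] [Nonempty ι] [Fintype κ]
    {x : ι → κ → ℝ} {v : κ → ℝ}
    (hv : IsMaxOn (fun u : κ → ℝ => |∏ i, ∑ j, u j * x i j|) {u | ∑ j, u j ^ 2 = 1} v)
    (g : κ → ℝ) :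
    (∏ i, ∑ j, g j * x i j) ^ 2 ≤
      (∏ i, ∑ j, v j * x i j) ^ 2 * (∑ j, g j ^ 2) ^ Fintype.card ι := by
  rcases (sum_nonneg fun j _ => sq_nonneg (g j) : 0 ≤ ∑ j, g j ^ 2).eq_or_lt with hs | hs
  · have hg : g = 0 := funext fun j => by
      simpa using (sum_eq_zero_iff_of_nonneg fun j _ => sq_nonneg (g j)).1 hs.symm j (mem_univ j)
    simp [hg]
  obtain ⟨r, hr_def⟩ : ∃ r, r = √(∑ j, g j ^ 2) := ⟨_, rfl⟩
  have hr : 0 < r := hr_def ▸ Real.sqrt_pos.2 hs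
  have hr2 : r ^ 2 = ∑ j, g j ^ 2 := hr_def ▸ Real.sq_sqrt hs.le
  have hu : ∑ j, (r⁻¹ * g j) ^ 2 = 1 := by
    simp_rw [mul_pow, ← mul_sum, ← hr2, inv_pow, inv_mul_cancel₀ (pow_pos hr 2).ne']
  have hscale : ∏ i, ∑ j, g j * x i j = r ^ Fintype.card ι * ∏ i, ∑ j, r⁻¹ * g j * x i j := by
    rw [← card_univ, ← prod_const, ← prod_mul_distrib]
    refine prod_congr rfl fun i _ => ?_
    rw [mul_sum]
    exact sum_congr rfl fun j _ => by field_simp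
  have hmax : (∏ i, ∑ j, r⁻¹ * g j * x i j) ^ 2 ≤ (∏ i, ∑ j, v j * x i j) ^ 2 :=
    sq_le_sq.2 (isMaxOn_iff.1 hv _ hu)
  calc (∏ i, ∑ j, g j * x i j) ^ 2
      = (r ^ 2) ^ Fintype.card ι * (∏ i, ∑ j, r⁻¹ * g j * x i j) ^ 2 := by rw [hscale]; ring
    _ ≤ (∑ j, g j ^ 2) ^ Fintype.card ι * (∏ i, ∑ j, v j * x i j) ^ 2 := by rw [hr2]; gcongr
    _ = _ := mul_comm _ _

section Gaussian

open ProbabilityTheory Real Set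

lemma integrable_pow_gaussianReal_s11 (n : ℕ) : Integrable (fun y : ℝ => y ^ n) (gaussianReal 0 1) :=
  (integrable_norm_iff (by fun_prop)).1 <| by
    simpa [norm_pow] using (memLp_id_gaussianReal (μ := 0) (v := 1) n).integrable_norm_pow'

lemma integral_pow_two_mul_gaussianReal (q : ℕ) :
    ∫ y, y ^ (2 * q) ∂(gaussianReal 0 1) = ((2 * q - 1)‼ : ℝ) := by
  -- by symmetry this is `2 / √(2π)` times the Gamma integral `∫₀^∞ t^{2q} e^{-t²/2} dt`
  have hdensity : ∀ y : ℝ, gaussianPDFReal 0 1 y • y ^ (2 * q)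
      = (√(2 * π))⁻¹ * (|y| ^ ((2 * q : ℕ) : ℝ) * rexp (-(1 / 2) * |y| ^ (2 : ℝ))) := by
    intro y
    rw [rpow_two, sq_abs, rpow_natCast, (even_two_mul q).pow_abs]
    simp [gaussianPDFReal]
    ring_nf
  have hexponent : (((2 * q : ℕ) : ℝ) + 1) / 2 = q + 1 / 2 := by push_cast; ring
  have hscale : (1 / 2 : ℝ) ^ (-(((2 * q : ℕ) : ℝ) + 1) / 2) = 2 ^ q * √2 := by
    rw [one_div, inv_rpow (by norm_num), ← rpow_neg (by norm_num), sqrt_eq_rpow,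
      ← rpow_natCast, ← rpow_add (by norm_num)]
    congr 1; push_cast; ring
  rw [integral_gaussianReal_eq_integral_smul one_ne_zero, integral_congr_ae (ae_of_all _ hdensity),
    integral_const_mul,
    integral_comp_abs (f := fun t => t ^ ((2 * q : ℕ) : ℝ) * rexp (-(1 / 2) * t ^ (2 : ℝ))),
    integral_rpow_mul_exp_neg_mul_rpow (by norm_num)
      (by linarith [Nat.cast_nonneg (α := ℝ) (2 * q)]) (by norm_num),
    hexponent, Gamma_nat_add_half, hscale, sqrt_mul (by norm_num)]
  field_simp

lemma map_stdGaussian_sum_mul {d : ℕ} (u : Fin d → ℝ) (hu : ∑ j, u j ^ 2 = 1) :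
    (stdGaussian d).map (fun g => ∑ j, u j * g j) = gaussianReal 0 1 := by
  set L : StrongDual ℝ (EuclideanSpace ℝ (Fin d)) := innerSL ℝ (WithLp.toLp 2 u)
  have hL : (fun g : Fin d → ℝ => ∑ j, u j * g j) = L ∘ WithLp.toLp 2 := by
    ext g; simp [L, PiLp.inner_apply, mul_comm]
  have hnorm : ‖L‖ = 1 := by
    rw [innerSL_apply_norm, EuclideanSpace.norm_eq]
    simp [hu]
  rw [hL, ← Measure.map_map L.continuous.measurable (by fun_prop), _root_.stdGaussian,
    map_pi_eq_stdGaussian, IsGaussian.map_eq_gaussianReal, integral_strongDual_stdGaussian,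
    variance_dual_stdGaussian, hnorm]
  simp

lemma integral_sum_mul_pow_stdGaussian {d : ℕ} (u : Fin d → ℝ) (hu : ∑ j, u j ^ 2 = 1) (n : ℕ) :
    ∫ g, (∑ j, u j * g j) ^ n ∂(stdGaussian d) = ∫ y, y ^ n ∂(gaussianReal 0 1) := by
  rw [← map_stdGaussian_sum_mul u hu,
    integral_map (by fun_prop : Measurable fun g : Fin d → ℝ => ∑ j, u j * g j).aemeasurable
      (by fun_prop)]

lemma integrable_prod_pow_stdGaussian {d : ℕ} (a : Fin d → ℕ) :
    Integrable (fun g : Fin d → ℝ => ∏ j, g j ^ a j) (stdGaussian d) :=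
  Integrable.fintype_prod fun j => integrable_pow_gaussianReal_s11 (a j)

lemma integral_prod_pow_stdGaussian {d : ℕ} (a : Fin d → ℕ) :
    ∫ g, ∏ j, g j ^ a j ∂(stdGaussian d) = ∏ j, ∫ y, y ^ a j ∂(gaussianReal 0 1) :=
  integral_fintype_prod_eq_prod (fun j y => y ^ a j)

lemma sum_sq_pow_eq_sum_piAntidiag {κ : Type*} [Fintype κ] [DecidableEq κ] (k : ℕ) (g : κ → ℝ) :
    (∑ j, g j ^ 2) ^ k
      = ∑ a ∈ piAntidiag univ k, (Nat.multinomial univ a : ℝ) * ∏ j, g j ^ (2 * a j) := by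
  simp_rw [sum_pow_eq_sum_piAntidiag, pow_mul]

lemma integrable_sum_sq_pow_stdGaussian {d : ℕ} (k : ℕ) :
    Integrable (fun g : Fin d → ℝ => (∑ j, g j ^ 2) ^ k) (stdGaussian d) := by
  simp_rw [sum_sq_pow_eq_sum_piAntidiag]
  exact integrable_finsetSum _ fun a _ => (integrable_prod_pow_stdGaussian _).const_mul _

lemma integral_sum_sq_pow_stdGaussian_le {d : ℕ} (k : ℕ) :
    ∫ g, (∑ j, g j ^ 2) ^ k ∂(stdGaussian d) ≤ (k + 1) ^ d * (2 ^ k * k ! : ℝ) := by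
  simp_rw [sum_sq_pow_eq_sum_piAntidiag]
  rw [integral_finsetSum _ fun a _ => (integrable_prod_pow_stdGaussian _).const_mul _]
  have hterm : ∀ a ∈ piAntidiag (univ : Finset (Fin d)) k,
      ∫ g, (Nat.multinomial univ a : ℝ) * ∏ j, g j ^ (2 * a j) ∂(stdGaussian d)
        ≤ 2 ^ k * k ! := by
    intro a ha
    rw [mem_piAntidiag] at ha
    rw [integral_const_mul, integral_prod_pow_stdGaussian]
    simp_rw [integral_pow_two_mul_gaussianReal, ← ha.1]
    exact_mod_cast Nat.multinomial_mul_prod_doubleFactorial_le a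
  calc _ ≤ ∑ _a ∈ piAntidiag (univ : Finset (Fin d)) k, (2 ^ k * k ! : ℝ) := sum_le_sum hterm
    _ ≤ _ := by
      rw [sum_const, nsmul_eq_mul]
      gcongr
      exact_mod_cast Fintype.card_fin d ▸ card_piAntidiag_univ_le k

end Gaussian

lemma integral_prod_sum_mul_pow_le_of_isMaxOn {d : ℕ} (hd : 0 < d) {x : Fin d → Fin d → ℝ}
    {v : Fin d → ℝ}
    (hv : IsMaxOn (fun u : Fin d → ℝ => |∏ i, ∑ j, u j * x i j|) {u | ∑ j, u j ^ 2 = 1} v)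
    (q : ℕ) :
    ∫ g, ∏ i, (∑ j, x i j * g j) ^ (2 * q) ∂(stdGaussian d) ≤
      ((∏ i, ∑ j, v j * x i j) ^ 2) ^ q * ((q * d + 1) ^ d * (2 ^ (q * d) * (q * d)! : ℝ)) := by
  have : Nonempty (Fin d) := ⟨⟨0, hd⟩⟩
  set P := (∏ i, ∑ j, v j * x i j) ^ 2
  have hpointwise (g : Fin d → ℝ) :
      ∏ i, (∑ j, x i j * g j) ^ (2 * q) ≤ P ^ q * (∑ j, g j ^ 2) ^ (q * d) :=
    calc ∏ i, (∑ j, x i j * g j) ^ (2 * q) = ((∏ i, ∑ j, g j * x i j) ^ 2) ^ q := by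
          simp_rw [prod_pow, ← pow_mul, mul_comm (x _ _)]
      _ ≤ (P * (∑ j, g j ^ 2) ^ d) ^ q := by
          gcongr
          simpa using sq_prod_sum_mul_le_of_isMaxOn hv g
      _ = P ^ q * (∑ j, g j ^ 2) ^ (q * d) := by
          rw [mul_pow, ← pow_mul (∑ j, g j ^ 2), mul_comm d q]
  calc _ ≤ ∫ g, P ^ q * (∑ j, g j ^ 2) ^ (q * d) ∂(stdGaussian d) :=
        integral_mono_of_nonneg
          (ae_of_all _ fun g => prod_nonneg fun i _ => (even_two_mul q).pow_nonneg _)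
          ((integrable_sum_sq_pow_stdGaussian _).const_mul _) (ae_of_all _ hpointwise)
    _ ≤ _ := by
        rw [integral_const_mul]
        gcongr
        exact_mod_cast integral_sum_sq_pow_stdGaussian_le (q * d)

lemma one_le_mul_pow_of_prod_integral_le {d q : ℕ} (hd : 0 < d) (hq : 1 ≤ q)
    {x : Fin d → Fin d → ℝ} (hx : ∀ i, ∑ j, x i j ^ 2 = 1) {v : Fin d → ℝ}
    (hv : IsMaxOn (fun u : Fin d → ℝ => |∏ i, ∑ j, u j * x i j|) {u | ∑ j, u j ^ 2 = 1} v)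
    (hGPC : ∏ i, ∫ g, (∑ j, x i j * g j) ^ (2 * q) ∂(stdGaussian d) ≤
      ∫ g, ∏ i, (∑ j, x i j * g j) ^ (2 * q) ∂(stdGaussian d)) :
    1 ≤ (4 * d) ^ d * (q : ℝ) ^ (2 * d) * ((∏ i, ∑ j, v j * x i j) ^ 2 * d ^ d) ^ q := by
  set P := (∏ i, ∑ j, v j * x i j) ^ 2
  obtain ⟨m, hm_def⟩ : ∃ m : ℝ, m = (2 * q - 1)‼ := ⟨_, rfl⟩
  have hm : 0 < m := hm_def ▸ Nat.cast_pos.2 (Nat.doubleFactorial_pos _)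
  have hmoments : ∏ i, ∫ g, (∑ j, x i j * g j) ^ (2 * q) ∂(stdGaussian d) = m ^ d := by
    simp [integral_sum_mul_pow_stdGaussian _ (hx _), integral_pow_two_mul_gaussianReal, hm_def]
  have hfactorial : (2 ^ (q * d) * (q * d)! : ℝ) ≤ d ^ (q * d) * (2 * q) ^ d * m ^ d := by
    rw [hm_def]
    exact_mod_cast Nat.two_pow_mul_mul_factorial_le hq d
  have hone : 1 ≤ P ^ q * d ^ (q * d) * (q * d + 1) ^ d * (2 * q) ^ d := by
    refine le_of_mul_le_mul_left ?_ (pow_pos hm d)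
    calc m ^ d * 1 = ∏ i, ∫ g, (∑ j, x i j * g j) ^ (2 * q) ∂(stdGaussian d) := by
          rw [mul_one, hmoments]
      _ ≤ P ^ q * ((q * d + 1) ^ d * (2 ^ (q * d) * (q * d)! : ℝ)) :=
          hGPC.trans (integral_prod_sum_mul_pow_le_of_isMaxOn hd hv q)
      _ ≤ P ^ q * ((q * d + 1) ^ d * (d ^ (q * d) * (2 * q) ^ d * m ^ d)) := by
          gcongr _ * (_ * ?_)
      _ = m ^ d * (P ^ q * d ^ (q * d) * (q * d + 1) ^ d * (2 * q) ^ d) := by ring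
  have hqd : (q * d + 1 : ℝ) ≤ 2 * q * d := by
    have : (1 : ℝ) ≤ q * d := by exact_mod_cast Nat.one_le_iff_ne_zero.2 (by positivity)
    linarith
  calc 1 ≤ P ^ q * d ^ (q * d) * (q * d + 1) ^ d * (2 * q) ^ d := hone
    _ ≤ P ^ q * d ^ (q * d) * (2 * q * d) ^ d * (2 * q) ^ d := by gcongr
    _ = (4 * d) ^ d * (q : ℝ) ^ (2 * d) * (P * d ^ d) ^ q := by
        rw [mul_pow 4, show (4 : ℝ) ^ d = 2 ^ d * 2 ^ d by rw [← mul_pow]; norm_num]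
        ring

/-- The Gaussian product conjecture implies the real polarization conjecture:
if for all integers `q ≥ 1` and every centered Gaussian vector `(G₁,…,G_d)` with unit
variances one has `E[G₁^{2q} ⋯ G_d^{2q}] ≥ ∏ E[G_i^{2q}]`, then for any `d ≥ 2` and unit
vectors `x₁,…,x_d ∈ ℝ^d` there is a unit vector `v` with `|⟨v,x₁⟩ ⋯ ⟨v,x_d⟩| ≥ d^{-d/2}`. -/
theorem gaussian_product_implies_polarization
    (d : ℕ) (hd : 2 ≤ d)
    (hGPC : ∀ q : ℕ, 1 ≤ q → ∀ v : Fin d → (Fin d → ℝ), (∀ i, ∑ j, v i j ^ 2 = 1) →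
      ∫ x, ∏ i, (∑ j, v i j * x j) ^ (2 * q) ∂(stdGaussian d) ≥
        ∏ i, ∫ x, (∑ j, v i j * x j) ^ (2 * q) ∂(stdGaussian d))
    (x : Fin d → (Fin d → ℝ)) (hx : ∀ i, ∑ j, x i j ^ 2 = 1) :
    ∃ v : Fin d → ℝ, ∑ j, v j ^ 2 = 1 ∧
      |∏ i, ∑ j, v j * x i j| ≥ (d : ℝ) ^ (-(d : ℝ) / 2) := by
  have hd0 : 0 < d := by omega
  have hsphere : {u : Fin d → ℝ | ∑ j, u j ^ 2 = 1}.Nonempty :=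
    ⟨Pi.single ⟨0, hd0⟩ 1, by simp [Pi.single_apply, apply_ite (· ^ 2)]⟩
  obtain ⟨v, hv, hvmax⟩ := (isCompact_setOf_sum_sq_eq_one (Fin d)).exists_isMaxOn hsphere
    (by fun_prop : Continuous fun u : Fin d → ℝ => |∏ i, ∑ j, u j * x i j|).continuousOn
  refine ⟨v, hv, rpow_neg_div_two_le_of_one_le_sq_mul hd0 (abs_nonneg _) ?_⟩
  rw [sq_abs]
  exact one_le_of_forall_one_le_mul_pow_mul_pow (by positivity) fun q hq =>
    one_le_mul_pow_of_prod_integral_le hd0 hq hx hvmax (hGPC q hq x hx)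
end

section
/- For every real x and every z with |z| < 1, ∑_{k=0}^∞ (H_k(x)²/k!) z^k = (1 - z²)^{-1/2} · exp( z x² / (z + 1) ), where H_k are the probabilists' Hermite polynomials. -/
open Polynomial


lemma derivative_hermite (n : ℕ) :
    derivative (hermite (n+1)) = (n+1 : ℕ) • hermite n := by
  induction n with
  | zero => simp [hermite_one, hermite_zero]
  | succ n ih =>
    rw [hermite_succ (n+1), derivative_sub, derivative_mul, derivative_X, one_mul, ih,
      derivative_smul]
    rw [mul_smul_comm, hermite_succ n, succ_nsmul]
    module

lemma herm_rec (x : ℝ) (n : ℕ) :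
    (aeval x (hermite (n+2)) : ℝ)
      = x * aeval x (hermite (n+1)) - (n+1) * aeval x (hermite n) := by
  rw [hermite_succ (n+1), map_sub, map_mul, aeval_X, derivative_hermite, map_nsmul, nsmul_eq_mul]
  push_cast
  ring

lemma hermite_growth (x r : ℝ) (hr : 1 < r) :
    ∃ A : ℝ, 0 < A ∧ ∀ n : ℕ,
      |(aeval x (hermite n) : ℝ)| ≤ A * r ^ n * Real.sqrt (n.factorial) := by
  set u : ℕ → ℝ := fun n => (aeval x (hermite n) : ℝ) with hu
  have hr0 : 0 < r := lt_trans one_pos hr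
  set δ : ℝ := 1 - 1 / r ^ 2 with hδ
  have hδ0 : 0 < δ := by
    have h1 : 1 / r ^ 2 < 1 := by
      rw [div_lt_one (by positivity)]
      nlinarith
    simp only [hδ]
    linarith
  set N : ℕ := Nat.ceil ((|x| / (δ * r)) ^ 2) with hN
  have hxN : |x| ≤ δ * r * Real.sqrt ((N : ℝ) + 1) := by
    have h1 : ((|x| / (δ * r)) ^ 2 : ℝ) ≤ (N : ℝ) + 1 := by
      have := Nat.le_ceil ((|x| / (δ * r)) ^ 2)
      push_cast at this ⊢
      linarith
    have h2 : |x| / (δ * r) ≤ Real.sqrt ((N : ℝ) + 1) := by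
      have h3 := Real.sqrt_le_sqrt h1
      rwa [Real.sqrt_sq (by positivity)] at h3
    calc |x| = |x| / (δ * r) * (δ * r) := by field_simp
      _ ≤ Real.sqrt ((N : ℝ) + 1) * (δ * r) :=
          mul_le_mul_of_nonneg_right h2 (by positivity)
      _ = δ * r * Real.sqrt ((N : ℝ) + 1) := by ring
  set A : ℝ := 1 + ∑ k ∈ Finset.range (N + 2),
      |u k| / (r ^ k * Real.sqrt (k.factorial)) with hA
  have hA1 : (1 : ℝ) ≤ A := by
    have : (0 : ℝ) ≤ ∑ k ∈ Finset.range (N + 2),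
        |u k| / (r ^ k * Real.sqrt (k.factorial)) :=
      Finset.sum_nonneg fun k _ => by positivity
    rw [hA]
    linarith
  have hA0 : 0 < A := lt_of_lt_of_le one_pos hA1
  refine ⟨A, hA0, ?_⟩
  have hsmall : ∀ n, n < N + 2 → |u n| ≤ A * r ^ n * Real.sqrt (n.factorial) := by
    intro n hn
    have hden : (0 : ℝ) < r ^ n * Real.sqrt (n.factorial) := by
      have : (0:ℝ) < Real.sqrt (n.factorial) := Real.sqrt_pos.mpr (by positivity)
      positivity
    have h1 : |u n| / (r ^ n * Real.sqrt (n.factorial)) ≤ A := by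
      rw [hA]
      have := Finset.single_le_sum
        (f := fun k => |u k| / (r ^ k * Real.sqrt (k.factorial)))
        (fun k _ => by positivity) (Finset.mem_range.mpr hn)
      linarith
    calc |u n| = |u n| / (r ^ n * Real.sqrt (n.factorial))
          * (r ^ n * Real.sqrt (n.factorial)) := by field_simp
      _ ≤ A * (r ^ n * Real.sqrt (n.factorial)) :=
          mul_le_mul_of_nonneg_right h1 (le_of_lt hden)
      _ = A * r ^ n * Real.sqrt (n.factorial) := by ring
  intro n
  induction n using Nat.strong_induction_on with
  | _ n ih =>
    rcases lt_or_ge n (N + 2) with h | h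
    · exact hsmall n h
    · obtain ⟨m, rfl⟩ : ∃ m, n = m + 2 := ⟨n - 2, by omega⟩
      have hmN : N ≤ m := by omega
      have h1 := ih (m + 1) (by omega)
      have h0 := ih m (by omega)
      set s1 : ℝ := Real.sqrt ((m : ℝ) + 1) with hs1
      set s2 : ℝ := Real.sqrt ((m : ℝ) + 2) with hs2
      set f : ℝ := Real.sqrt (m.factorial) with hf
      have hs1n : 0 ≤ s1 := Real.sqrt_nonneg _
      have hs2n : 0 ≤ s2 := Real.sqrt_nonneg _
      have hfn : 0 ≤ f := Real.sqrt_nonneg _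
      have hfact1 : Real.sqrt ((m+1).factorial) = s1 * f := by
        rw [hs1, hf, ← Real.sqrt_mul (by positivity)]
        congr 1
        rw [Nat.factorial_succ]
        push_cast
        ring
      have hfact2 : Real.sqrt ((m+2).factorial) = s2 * (s1 * f) := by
        rw [← hfact1, hs2, ← Real.sqrt_mul (by positivity)]
        congr 1
        rw [show m + 2 = (m+1) + 1 by ring, Nat.factorial_succ (m+1)]
        push_cast
        ring
      have e1 : |u (m+1)| ≤ A * r ^ (m+1) * (s1 * f) := by rw [← hfact1]; exact h1
      have e0 : |u m| ≤ A * r ^ m * f := h0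
      have hs12 : s1 ≤ s2 := Real.sqrt_le_sqrt (by linarith)
      have hx2 : |x| ≤ δ * r * s2 := by
        refine hxN.trans ?_
        have hNm : ((N : ℝ) + 1) ≤ (m : ℝ) + 2 := by
          have : (N : ℝ) ≤ m := Nat.cast_le.mpr hmN
          linarith
        have h5 : Real.sqrt ((N : ℝ) + 1) ≤ s2 := Real.sqrt_le_sqrt hNm
        gcongr
      have hm1 : ((m : ℝ) + 1) = s1 * s1 := (Real.mul_self_sqrt (by positivity)).symm
      have hrec : |u (m+2)| ≤ |x| * |u (m+1)| + ((m : ℝ) + 1) * |u m| := by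
        have h4 : u (m+2) = x * u (m+1) - ((m : ℝ)+1) * u m := herm_rec x m
        rw [h4]
        refine (abs_sub _ _).trans ?_
        rw [abs_mul, abs_mul, abs_of_nonneg (by positivity : (0:ℝ) ≤ (m:ℝ)+1)]
      rw [hfact2]
      show |u (m+2)| ≤ _
      calc |u (m+2)| ≤ |x| * |u (m+1)| + ((m : ℝ) + 1) * |u m| := hrec
        _ ≤ (δ * r * s2) * (A * r ^ (m+1) * (s1 * f))
            + (s1 * s1) * (A * r ^ m * f) := by
            rw [hm1]
            gcongr <;> positivity
        _ ≤ (δ * r * s2) * (A * r ^ (m+1) * (s1 * f))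
            + (s1 * s2) * (A * r ^ m * f) := by
            gcongr
        _ = A * r ^ (m+2) * (s2 * (s1 * f)) * δ
            + A * r ^ (m+2) * (s2 * (s1 * f)) * (1 - δ) := by
            have hδ' : 1 - δ = 1 / r ^ 2 := by rw [hδ]; ring
            rw [hδ']
            field_simp
            ring
        _ = A * r ^ (m+2) * (s2 * (s1 * f)) := by ring


set_option maxHeartbeats 1000000 in
/-- **Mehler's diagonal formula.** For every real `x` and `|z| < 1`,
`∑_{k} H_k(x)² z^k / k! = (1 - z²)^{-1/2} exp(z x² / (z+1))`. -/
theorem mehler_diagonal (x z : ℝ) (hz : |z| < 1) :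
    ∑' k : ℕ, (Polynomial.aeval x (Polynomial.hermite k)) ^ 2 / (Nat.factorial k) * z ^ k =
      (Real.sqrt (1 - z ^ 2))⁻¹ * Real.exp (z * x ^ 2 / (z + 1)) := by
  set u : ℕ → ℝ := fun n => (aeval x (hermite n) : ℝ) with hu
  set c : ℕ → ℝ := fun n => u n ^ 2 / (n.factorial : ℝ) with hc
  have habs : 0 ≤ |z| := abs_nonneg z
  set ρ : ℝ := (1 + |z|) / 2 with hρ
  have hρ0 : 0 < ρ := by rw [hρ]; linarith
  have hzρ : |z| < ρ := by rw [hρ]; linarith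
  have hρ1 : ρ < 1 := by rw [hρ]; linarith
  set r : ℝ := Real.sqrt ((1 + 1 / ρ) / 2) with hr
  have h1ρ : 1 < 1 / ρ := one_lt_one_div hρ0 hρ1
  have hr2 : r ^ 2 = (1 + 1 / ρ) / 2 := Real.sq_sqrt (by linarith)
  have hr1 : 1 < r := by nlinarith [Real.sqrt_nonneg ((1 + 1 / ρ) / 2)]
  have hr0 : 0 < r := lt_trans one_pos hr1
  set q : ℝ := r ^ 2 * ρ with hq
  have hq0 : 0 < q := by positivity
  have hq1 : q < 1 := by
    rw [hq, hr2]
    have h : (1 + 1 / ρ) / 2 * ρ = (ρ + 1) / 2 := by field_simp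
    rw [h]; linarith
  obtain ⟨A, hA0, hbound⟩ := hermite_growth x r hr1
  have hfact_pos : ∀ n : ℕ, (0 : ℝ) < (n.factorial : ℝ) := fun n => by
    exact_mod_cast n.factorial_pos
  have hfs : ∀ n : ℕ, ((n+1).factorial : ℝ) = ((n : ℝ) + 1) * (n.factorial : ℝ) := by
    intro n; rw [Nat.factorial_succ]; push_cast; ring
  have hsq : ∀ n : ℕ, u n ^ 2 ≤ A ^ 2 * (r ^ 2) ^ n * (n.factorial : ℝ) := by
    intro n
    have h2 : u n ^ 2 ≤ (A * r ^ n * Real.sqrt (n.factorial)) ^ 2 := by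
      rw [← sq_abs]
      exact pow_le_pow_left₀ (abs_nonneg _) (hbound n) 2
    have h3 : (Real.sqrt ((n.factorial : ℝ))) ^ 2 = (n.factorial : ℝ) :=
      Real.sq_sqrt (le_of_lt (hfact_pos n))
    calc u n ^ 2 ≤ (A * r ^ n * Real.sqrt (n.factorial)) ^ 2 := h2
      _ = A ^ 2 * (r ^ 2) ^ n * (Real.sqrt ((n.factorial : ℝ))) ^ 2 := by
          rw [mul_pow, mul_pow, ← pow_mul, ← pow_mul, mul_comm 2 n]
      _ = A ^ 2 * (r ^ 2) ^ n * (n.factorial : ℝ) := by rw [h3]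
  have hcb : ∀ n : ℕ, c n ≤ A ^ 2 * (r ^ 2) ^ n := by
    intro n
    rw [hc, div_le_iff₀ (hfact_pos n)]
    exact hsq n
  have hcnn : ∀ n : ℕ, 0 ≤ c n := fun n => by positivity
  have hqn : ‖q‖ < 1 := by rwa [Real.norm_eq_abs, abs_of_pos hq0]
  have hone : ∀ n : ℕ, (1 : ℝ) ≤ ((n : ℝ) + 1) ^ 2 := by
    intro n
    have h : (0 : ℝ) ≤ (n : ℝ) := Nat.cast_nonneg n
    nlinarith
  have master : ∀ (a : ℕ → ℝ) (K : ℝ),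
      (∀ n, |a n| ≤ K * ((n : ℝ) + 1) ^ 2 * q ^ n) → Summable a := by
    intro a K hK
    have hg2 : Summable (fun n : ℕ => ((n : ℝ)) ^ 2 * q ^ n) :=
      summable_pow_mul_geometric_of_norm_lt_one 2 hqn
    have hg1 : Summable (fun n : ℕ => ((n : ℝ)) ^ 1 * q ^ n) :=
      summable_pow_mul_geometric_of_norm_lt_one 1 hqn
    have hg0 : Summable (fun n : ℕ => ((n : ℝ)) ^ 0 * q ^ n) :=
      summable_pow_mul_geometric_of_norm_lt_one 0 hqn
    have hsum : Summable (fun n : ℕ => K * ((n : ℝ) + 1) ^ 2 * q ^ n) := by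
      have h := ((hg2.add ((hg1.mul_left 2).add hg0)).mul_left K)
      refine h.congr fun n => ?_
      ring
    exact Summable.of_norm
      (Summable.of_nonneg_of_le (fun n => norm_nonneg _) (fun n => hK n) hsum)
  have upg : ∀ (B : ℝ) (n : ℕ), 0 ≤ B →
      B * q ^ n ≤ B * ((n : ℝ) + 1) ^ 2 * q ^ n := by
    intro B n hB
    have h1 := hone n
    have h2 : (0 : ℝ) ≤ q ^ n := by positivity
    nlinarith [mul_nonneg hB h2]
  set F : ℝ → ℝ := fun y => ∑' n, c n * y ^ n with hF
  have hst1 : ∀ y : ℝ, |y| ≤ ρ → Summable (fun n => c n * y ^ n) := by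
    intro y hy
    refine master _ (A ^ 2) fun n => ?_
    have h1 : |c n * y ^ n| = c n * |y| ^ n := by
      rw [abs_mul, abs_of_nonneg (hcnn n), abs_pow]
    rw [h1]
    calc c n * |y| ^ n ≤ (A ^ 2 * (r ^ 2) ^ n) * ρ ^ n :=
          mul_le_mul (hcb n) (pow_le_pow_left₀ (abs_nonneg y) hy n)
            (by positivity) (by positivity)
      _ = A ^ 2 * q ^ n := by rw [hq, mul_pow]; ring
      _ ≤ A ^ 2 * ((n : ℝ) + 1) ^ 2 * q ^ n := upg _ n (by positivity)
  have hball : ∀ y : ℝ, y ∈ Metric.ball (0 : ℝ) ρ ↔ |y| < ρ := by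
    intro y; rw [Metric.mem_ball, Real.dist_eq, sub_zero]
  have hDF : ∀ y : ℝ, |y| < ρ →
      HasDerivAt F (∑' n, c n * ((n : ℝ) * y ^ (n - 1))) y := by
    intro y hy
    refine hasDerivAt_tsum_of_isPreconnected
      (u := fun (n : ℕ) => A ^ 2 / ρ * ((n : ℝ) * q ^ n))
      (t := Metric.ball (0 : ℝ) ρ) (y₀ := (0 : ℝ))
      (g := fun (n : ℕ) (w : ℝ) => c n * w ^ n)
      (g' := fun (n : ℕ) (w : ℝ) => c n * ((n : ℝ) * w ^ (n - 1)))
      ?_ Metric.isOpen_ball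
      (Convex.isPreconnected (convex_ball _ _))
      (fun n w _ => (hasDerivAt_pow n w).const_mul (c n)) ?_ ?_ ?_ ?_
    · refine Summable.mul_left _ ?_
      have h := summable_pow_mul_geometric_of_norm_lt_one 1 hqn
      exact h.congr fun n => by rw [pow_one]
    · intro n w hw
      rw [hball] at hw
      match n with
      | 0 => simp
      | (m+1) =>
        rw [Real.norm_eq_abs, abs_mul, abs_of_nonneg (hcnn _), abs_mul, abs_pow]
        have h2 : |((m : ℝ) + 1)| = (m : ℝ) + 1 := abs_of_nonneg (by positivity)
        push_cast
        rw [h2]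
        have h3 : |w| ^ (m + 1 - 1) ≤ ρ ^ m := by
          simpa using pow_le_pow_left₀ (abs_nonneg w) (le_of_lt hw) m
        calc c (m+1) * (((m:ℝ)+1) * |w| ^ (m + 1 - 1))
            ≤ (A ^ 2 * (r ^ 2) ^ (m+1)) * (((m:ℝ)+1) * ρ ^ m) := by
              refine mul_le_mul (hcb (m+1)) ?_ (by positivity) (by positivity)
              exact mul_le_mul_of_nonneg_left h3 (by positivity)
          _ = A ^ 2 / ρ * (((m:ℝ)+1) * q ^ (m+1)) := by
              rw [hq, mul_pow]
              field_simp [ne_of_gt hρ0]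
              ring
    · exact (hball 0).mpr (by simpa using hρ0)
    · exact hst1 0 (by simp [le_of_lt hρ0])
    · exact (hball y).mpr hy
  have hur : ∀ n : ℕ, u (n+2) = x * u (n+1) - ((n:ℝ)+1) * u n := fun n => herm_rec x n
  have hu0 : u 0 = 1 := by simp [hu, hermite_zero]
  have hu1 : u 1 = x := by simp [hu, hermite_one]
  set Φ : ℝ → ℝ := fun y => Real.sqrt (1 - y ^ 2) * Real.exp (-(x ^ 2 * (y / (1 + y))))
    with hΦ
  set H : ℝ → ℝ := fun y => F y * Φ y with hH
  have key : ∀ y : ℝ, |y| < ρ → HasDerivAt H 0 y := by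
    intro y hy
    have hyρ : |y| ≤ ρ := le_of_lt hy
    have hy1 : |y| < 1 := lt_trans hy hρ1
    have hylt := abs_lt.mp hy1
    have hy1p : 0 < 1 + y := by linarith [hylt.1]
    have h1y2 : 0 < 1 - y ^ 2 := by nlinarith [hylt.1, hylt.2]
    set t1 : ℕ → ℝ := fun n => c n * y ^ n with ht1
    set t2 : ℕ → ℝ := fun n => u (n+1) ^ 2 / (n.factorial : ℝ) * y ^ n with ht2
    set t3 : ℕ → ℝ := fun n => u (n+1) * u n / (n.factorial : ℝ) * y ^ n with ht3
    set t4 : ℕ → ℝ := fun n => (n : ℝ) * (u n * u (n-1)) / (n.factorial : ℝ) * y ^ n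
      with ht4
    set t5 : ℕ → ℝ := fun n => (n : ℝ) ^ 2 * u (n-1) ^ 2 / (n.factorial : ℝ) * y ^ n
      with ht5
    set t6 : ℕ → ℝ := fun n => (n : ℝ) * c n * y ^ n with ht6
    have hpow : ∀ n : ℕ, |y| ^ n ≤ ρ ^ n :=
      fun n => pow_le_pow_left₀ (abs_nonneg y) hyρ n
    -- summability of t1, t2, t3
    have st1 : Summable t1 := hst1 y hyρ
    have st2 : Summable t2 := by
      refine master _ (A ^ 2 * r ^ 2) fun n => ?_
      have h0 : u (n+1) ^ 2 / (n.factorial : ℝ)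
          = ((n:ℝ)+1) * (u (n+1) ^ 2 / (((n+1).factorial : ℝ))) := by
        rw [hfs n]
        field_simp
      have h1 : |t2 n| = ((n:ℝ)+1) * (u (n+1) ^ 2 / (((n+1).factorial : ℝ))) * |y| ^ n := by
        simp only [ht2]
        rw [abs_mul, abs_pow, abs_of_nonneg (by positivity), h0]
      rw [h1]
      calc ((n:ℝ)+1) * (u (n+1) ^ 2 / (((n+1).factorial : ℝ))) * |y| ^ n
          ≤ ((n:ℝ)+1) * (A ^ 2 * (r ^ 2) ^ (n+1)) * ρ ^ n := by
            refine mul_le_mul (mul_le_mul_of_nonneg_left (hcb (n+1)) (by positivity))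
              (hpow n) (by positivity) (by positivity)
        _ = (A ^ 2 * r ^ 2) * (((n:ℝ)+1) * q ^ n) := by rw [hq, mul_pow]; ring
        _ ≤ A ^ 2 * r ^ 2 * ((n:ℝ)+1) ^ 2 * q ^ n := by
            have h4 : (0:ℝ) ≤ (A ^ 2 * r ^ 2) * (((n:ℝ)+1) * q ^ n) * (n:ℝ) := by positivity
            nlinarith [h4]
    have st3 : Summable t3 := by
      refine master _ (A ^ 2 * r) fun n => ?_
      have hb1 : |u (n+1)| ≤ A * r ^ (n+1) * (((n:ℝ)+1) * Real.sqrt (n.factorial)) := by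
        refine (hbound (n+1)).trans ?_
        have h4 : Real.sqrt (((n+1).factorial : ℝ))
            = Real.sqrt ((n:ℝ)+1) * Real.sqrt (n.factorial) := by
          rw [← Real.sqrt_mul (by positivity), ← hfs n]
        rw [h4]
        have h5 : Real.sqrt ((n:ℝ)+1) ≤ (n:ℝ)+1 := by
          have := Real.sqrt_le_sqrt (show ((n:ℝ)+1) ≤ (((n:ℝ)+1))^2 by nlinarith [hone n])
          rwa [Real.sqrt_sq (by positivity)] at this
        have h6 : (0:ℝ) ≤ Real.sqrt (n.factorial) := Real.sqrt_nonneg _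
        have h7 : (0:ℝ) ≤ A * r ^ (n+1) := by positivity
        exact mul_le_mul_of_nonneg_left (mul_le_mul_of_nonneg_right h5 h6) h7
      have h8 : |t3 n| ≤ (A * r ^ (n+1) * (((n:ℝ)+1) * Real.sqrt (n.factorial)))
          * (A * r ^ n * Real.sqrt (n.factorial)) / (n.factorial : ℝ) * ρ ^ n := by
        simp only [ht3]
        rw [abs_mul, abs_pow, abs_div]
        rw [abs_of_pos (hfact_pos n), abs_mul]
        gcongr
        all_goals first | exact hb1 | exact hbound n | exact hyρ | positivity
      refine h8.trans ?_
      have h9 : (Real.sqrt ((n.factorial : ℝ))) * Real.sqrt ((n.factorial : ℝ))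
          = (n.factorial : ℝ) := Real.mul_self_sqrt (le_of_lt (hfact_pos n))
      have h10 : (A * r ^ (n+1) * (((n:ℝ)+1) * Real.sqrt (n.factorial)))
          * (A * r ^ n * Real.sqrt (n.factorial)) / (n.factorial : ℝ) * ρ ^ n
          = A ^ 2 * r * (((n:ℝ)+1) * q ^ n) := by
        have hrr : r ^ (n+1) * r ^ n = r * (r ^ 2) ^ n := by
          rw [← pow_add, ← pow_mul]
          rw [show n + 1 + n = 2 * n + 1 by ring]
          rw [pow_succ']
        rw [hq, mul_pow, div_mul_eq_mul_div, div_eq_iff (ne_of_gt (hfact_pos n))]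
        linear_combination (A ^ 2 * ((n:ℝ)+1) * ρ ^ n * (r ^ (n+1) * r ^ n)) * h9
          + (A ^ 2 * ((n:ℝ)+1) * ρ ^ n * (n.factorial : ℝ)) * hrr
      rw [h10]
      have h4 : (0:ℝ) ≤ (A ^ 2 * r) * (((n:ℝ)+1) * q ^ n) * (n:ℝ) := by positivity
      nlinarith [h4]
    -- shift identities
    have sh6 : ∀ n : ℕ, t6 (n + 1) = y * t2 n := by
      intro n
      simp only [ht6, ht2, hc]
      push_cast
      rw [hfs n]
      have h1 : ((n:ℝ)+1) ≠ 0 := by positivity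
      have h2 : (n.factorial : ℝ) ≠ 0 := ne_of_gt (hfact_pos n)
      field_simp
      ring
    have sh4 : ∀ n : ℕ, t4 (n + 1) = y * t3 n := by
      intro n
      simp only [ht4, ht3, Nat.add_sub_cancel]
      push_cast
      rw [hfs n]
      have h1 : ((n:ℝ)+1) ≠ 0 := by positivity
      have h2 : (n.factorial : ℝ) ≠ 0 := ne_of_gt (hfact_pos n)
      field_simp
      ring
    have sh5 : ∀ n : ℕ, t5 (n + 1) = y * (t6 n + t1 n) := by
      intro n
      simp only [ht5, ht6, ht1, hc, Nat.add_sub_cancel]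
      push_cast
      rw [hfs n]
      have h1 : ((n:ℝ)+1) ≠ 0 := by positivity
      have h2 : (n.factorial : ℝ) ≠ 0 := ne_of_gt (hfact_pos n)
      field_simp
      ring
    have st6 : Summable t6 :=
      (summable_nat_add_iff 1).mp ((st2.mul_left y).congr fun n => (sh6 n).symm)
    have st4 : Summable t4 :=
      (summable_nat_add_iff 1).mp ((st3.mul_left y).congr fun n => (sh4 n).symm)
    have st5 : Summable t5 :=
      (summable_nat_add_iff 1).mp
        (((st6.add st1).mul_left y).congr fun n => (sh5 n).symm)
    have t60 : t6 0 = 0 := by simp [ht6]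
    have t40 : t4 0 = 0 := by simp [ht4]
    have t50 : t5 0 = 0 := by simp [ht5]
    have e6 : ∑' n, t6 n = y * ∑' n, t2 n := by
      rw [Summable.tsum_eq_zero_add st6, t60, zero_add, tsum_congr sh6, tsum_mul_left]
    have e4 : ∑' n, t4 n = y * ∑' n, t3 n := by
      rw [Summable.tsum_eq_zero_add st4, t40, zero_add, tsum_congr sh4, tsum_mul_left]
    have e5 : ∑' n, t5 n = y * (y * ∑' n, t2 n) + y * ∑' n, t1 n := by
      rw [Summable.tsum_eq_zero_add st5, t50, zero_add, tsum_congr sh5, tsum_mul_left,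
        Summable.tsum_add st6 st1, e6, mul_add]
    -- pointwise recurrences
    have p3 : ∀ n : ℕ, t3 n = x * t1 n - t4 n := by
      intro n
      match n with
      | 0 => simp [ht3, ht4, ht1, hc, hu1, hu0]
      | (m+1) =>
        simp only [ht3, ht4, ht1, hc, Nat.add_sub_cancel]
        rw [show (m:ℕ)+1+1 = m+2 from rfl, hur m]
        push_cast
        ring
    have p2 : ∀ n : ℕ, t2 n = x ^ 2 * t1 n - 2 * x * t4 n + t5 n := by
      intro n
      match n with
      | 0 => simp [ht2, ht4, ht5, ht1, hc, hu1, hu0]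
      | (m+1) =>
        simp only [ht2, ht4, ht5, ht1, hc, Nat.add_sub_cancel]
        rw [show (m:ℕ)+1+1 = m+2 from rfl, hur m]
        push_cast
        ring
    -- tsum identities
    have eqG : (∑' n, t3 n) * (1 + y) = x * ∑' n, t1 n := by
      have h1 : ∑' n, t3 n = x * (∑' n, t1 n) - y * ∑' n, t3 n := by
        calc ∑' n, t3 n = ∑' n, (x * t1 n - t4 n) := tsum_congr p3
          _ = x * (∑' n, t1 n) - ∑' n, t4 n := by
              rw [Summable.tsum_sub (st1.mul_left x) st4, tsum_mul_left]
          _ = x * (∑' n, t1 n) - y * ∑' n, t3 n := by rw [e4]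
      linear_combination h1
    have eqS : (∑' n, t2 n) * ((1 - y ^ 2) * (1 + y))
        = (∑' n, t1 n) * (x ^ 2 * (1 - y) + y * (1 + y)) := by
      have h1 : ∑' n, t2 n = x ^ 2 * (∑' n, t1 n) - 2 * x * (y * ∑' n, t3 n)
          + (y * (y * ∑' n, t2 n) + y * ∑' n, t1 n) := by
        calc ∑' n, t2 n = ∑' n, (x ^ 2 * t1 n - 2 * x * t4 n + t5 n) := tsum_congr p2
          _ = (∑' n, (x ^ 2 * t1 n - 2 * x * t4 n)) + ∑' n, t5 n := by
              rw [Summable.tsum_add ((st1.mul_left (x^2)).sub (st4.mul_left (2*x))) st5]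
          _ = (x ^ 2 * (∑' n, t1 n) - 2 * x * ∑' n, t4 n) + ∑' n, t5 n := by
              rw [Summable.tsum_sub (st1.mul_left (x^2)) (st4.mul_left (2*x)),
                tsum_mul_left, tsum_mul_left]
          _ = x ^ 2 * (∑' n, t1 n) - 2 * x * (y * ∑' n, t3 n)
              + (y * (y * ∑' n, t2 n) + y * ∑' n, t1 n) := by rw [e4, e5]
      linear_combination (1 + y) * h1 - 2 * x * y * eqG
    -- the derivative of F at y equals ∑' t2
    have hDval : HasDerivAt F (∑' n, t2 n) y := by
      have hD := hDF y hy
      have hgs : Summable (fun n => c n * ((n : ℝ) * y ^ (n - 1))) := by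
        refine (summable_nat_add_iff 1).mp (st2.congr fun n => ?_)
        simp only [ht2, hc, Nat.add_sub_cancel]
        push_cast
        rw [hfs n]
        have h1 : ((n:ℝ)+1) ≠ 0 := by positivity
        have h2 : (n.factorial : ℝ) ≠ 0 := ne_of_gt (hfact_pos n)
        field_simp
      have heq : ∑' n, c n * ((n : ℝ) * y ^ (n - 1)) = ∑' n, t2 n := by
        rw [Summable.tsum_eq_zero_add hgs]
        simp only [Nat.cast_zero, zero_mul, mul_zero, zero_add]
        refine tsum_congr fun n => ?_
        simp only [ht2, hc, Nat.add_sub_cancel]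
        push_cast
        rw [hfs n]
        have h1 : ((n:ℝ)+1) ≠ 0 := by positivity
        have h2 : (n.factorial : ℝ) ≠ 0 := ne_of_gt (hfact_pos n)
        field_simp
      rw [← heq]
      exact hD
    -- derivative of Φ
    have hs0 : 0 < Real.sqrt (1 - y ^ 2) := Real.sqrt_pos.mpr h1y2
    have hinner : HasDerivAt (fun w : ℝ => 1 - w ^ 2) (-(2 * y ^ 1)) y := by
      have h := (hasDerivAt_pow 2 y).const_sub 1
      simpa using h
    have hSder : HasDerivAt (fun w : ℝ => Real.sqrt (1 - w ^ 2))
        (1 / (2 * Real.sqrt (1 - y ^ 2)) * -(2 * y ^ 1)) y :=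
      (Real.hasDerivAt_sqrt (ne_of_gt h1y2)).comp y hinner
    have hdivder : HasDerivAt (fun w : ℝ => w / (1 + w))
        ((1 * (1 + y) - y * 1) / (1 + y) ^ 2) y :=
      (hasDerivAt_id y).div ((hasDerivAt_id y).const_add 1) (ne_of_gt hy1p)
    have hexpder : HasDerivAt (fun w : ℝ => Real.exp (-(x ^ 2 * (w / (1 + w)))))
        (Real.exp (-(x ^ 2 * (y / (1 + y))))
          * -(x ^ 2 * ((1 * (1 + y) - y * 1) / (1 + y) ^ 2))) y :=
      HasDerivAt.exp (HasDerivAt.neg (hdivder.const_mul (x ^ 2)))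
    have hΦder : HasDerivAt Φ
        (1 / (2 * Real.sqrt (1 - y ^ 2)) * -(2 * y ^ 1)
            * Real.exp (-(x ^ 2 * (y / (1 + y))))
          + Real.sqrt (1 - y ^ 2) * (Real.exp (-(x ^ 2 * (y / (1 + y))))
            * -(x ^ 2 * ((1 * (1 + y) - y * 1) / (1 + y) ^ 2)))) y :=
      hSder.mul hexpder
    have hHder := hDval.mul hΦder
    have hΦy : Φ y = Real.sqrt (1 - y ^ 2) * Real.exp (-(x ^ 2 * (y / (1 + y)))) := rfl
    have hFy : F y = ∑' n, t1 n := rfl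
    rw [hΦy] at hHder
    have hzero : (∑' n, t2 n) * (Real.sqrt (1 - y ^ 2)
            * Real.exp (-(x ^ 2 * (y / (1 + y))))) + F y
        * (1 / (2 * Real.sqrt (1 - y ^ 2)) * -(2 * y ^ 1)
            * Real.exp (-(x ^ 2 * (y / (1 + y))))
          + Real.sqrt (1 - y ^ 2) * (Real.exp (-(x ^ 2 * (y / (1 + y))))
            * -(x ^ 2 * ((1 * (1 + y) - y * 1) / (1 + y) ^ 2)))) = 0 := by
      rw [hFy]
      set s : ℝ := Real.sqrt (1 - y ^ 2) with hsdef
      set e : ℝ := Real.exp (-(x ^ 2 * (y / (1 + y)))) with hedef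
      set Sv := ∑' n, t2 n with hSv
      set Fv := ∑' n, t1 n with hFv
      have hs2 : s ^ 2 = 1 - y ^ 2 := Real.sq_sqrt (le_of_lt h1y2)
      have hsne : s ≠ 0 := ne_of_gt hs0
      have hyne : (1 + y) ≠ 0 := ne_of_gt hy1p
      have hE : Sv * (s * e) + Fv
          * (1 / (2 * s) * -(2 * y ^ 1) * e + s * (e * -(x ^ 2 * ((1 * (1 + y) - y * 1) / (1 + y) ^ 2))))
          = (e / (s * (1 + y) ^ 2)) * (Sv * s ^ 2 * (1 + y) ^ 2
              - Fv * y * (1 + y) ^ 2 - Fv * s ^ 2 * x ^ 2) := by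
        field_simp
        ring
      rw [hE, hs2]
      have hmain : Sv * (1 - y ^ 2) * (1 + y) ^ 2 - Fv * y * (1 + y) ^ 2
          - Fv * (1 - y ^ 2) * x ^ 2 = 0 := by
        linear_combination (1 + y) * eqS
      rw [show Sv * (1 - y ^ 2) * (1 + y) ^ 2 - Fv * y * (1 + y) ^ 2
          - Fv * (1 - y ^ 2) * x ^ 2 = 0 from hmain, mul_zero]
    exact hzero ▸ hHder
  -- H is constant on the ball
  have hmem0 : (0:ℝ) ∈ Metric.ball (0:ℝ) ρ := (hball 0).mpr (by simpa using hρ0)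
  have hmemz : z ∈ Metric.ball (0:ℝ) ρ := (hball z).mpr hzρ
  have hconst : H z = H 0 := by
    refine (convex_ball (0:ℝ) ρ).is_const_of_fderivWithin_eq_zero
      (fun w hw => ((key w ((hball w).mp hw)).differentiableAt).differentiableWithinAt)
      (fun w hw => ?_) hmemz hmem0
    rw [fderivWithin_of_isOpen Metric.isOpen_ball hw,
      ((key w ((hball w).mp hw)).hasFDerivAt).fderiv]
    ext t
    simp
  have hF0 : F 0 = 1 := by
    have h : F 0 = ∑' n, c n * (0:ℝ) ^ n := rfl
    rw [h, tsum_eq_single 0 (fun n hn => by simp [zero_pow hn])]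
    simp [hc, hu0]
  have hΦ0 : Φ 0 = 1 := by simp [hΦ]
  have hH0 : H 0 = 1 := by
    have h : H 0 = F 0 * Φ 0 := rfl
    rw [h, hF0, hΦ0]; ring
  have hzlt := abs_lt.mp hz
  have hz1p : 0 < 1 + z := by linarith [hzlt.1]
  have h1z2 : 0 < 1 - z ^ 2 := by nlinarith [hzlt.1, hzlt.2]
  have hs0 : 0 < Real.sqrt (1 - z ^ 2) := Real.sqrt_pos.mpr h1z2
  have hfin : F z * (Real.sqrt (1 - z ^ 2) * Real.exp (-(x ^ 2 * (z / (1 + z))))) = 1 := by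
    exact hconst.trans hH0
  have hgoal : F z = (Real.sqrt (1 - z ^ 2))⁻¹ * Real.exp (z * x ^ 2 / (z + 1)) := by
    have hexp : Real.exp (-(x ^ 2 * (z / (1 + z)))) ≠ 0 := Real.exp_ne_zero _
    have h2 : F z = (Real.sqrt (1 - z ^ 2) * Real.exp (-(x ^ 2 * (z / (1 + z)))))⁻¹ := by
      field_simp at hfin ⊢
      linarith [hfin]
    rw [h2, mul_inv, ← Real.exp_neg, neg_neg]
    congr 1
    ring
  exact hgoal
end

section
/- Let f ∈ L²([0,1]^k) be a symmetric function, and let H_f ⊆ L²([0,1]) be the closed subspace spanned by the functions t ↦ ∫_A f(t_1,...,t_{k-1}, t) dt_1⋯dt_{k-1} as A ranges over Borel subsets of [0,1]^{k-1}. Then f belongs to the closed subspace H_f^{⊗k} of L²([0,1]^k) (and by symmetry to its symmetric part). -/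
open MeasureTheory

/-- Lebesgue measure on `[0,1]`. -/
noncomputable def unifI : Measure ℝ := volume.restrict (Set.Icc 0 1)

/-- Lebesgue measure on the cube `[0,1]^k` (as `Fin k → ℝ`). -/
noncomputable def unifCube (k : ℕ) : Measure (Fin k → ℝ) := Measure.pi fun _ => unifI

/-- The closed subspace `H_f` of `L²([0,1])` spanned by the marginal functions
`t ↦ ∫_A f(t₁,…,t_{k-1}, t) dt₁⋯dt_{k-1}`, `A` Borel, for `f ∈ L²([0,1]^k)`. -/
noncomputable def marginalSpace (m : ℕ) (f : Lp ℝ 2 (unifCube (m + 1))) :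
    Submodule ℝ (Lp ℝ 2 unifI) :=
  (Submodule.span ℝ {g : Lp ℝ 2 unifI | ∃ A : Set (Fin m → ℝ), MeasurableSet A ∧
    (g : ℝ → ℝ) =ᵐ[unifI] fun t => ∫ y in A, f (Fin.snoc y t) ∂(unifCube m)}).topologicalClosure

/-!
Let `M = H_f`. Every `e ∈ L²([0,1])` splits as `P_M e + (e - P_M e)`, so by multilinearity every
product `e₁ ⊗ ⋯ ⊗ e_k` lies in the span of products with all factors in `M` plus the span `N` of
products having some factor in `Mᗮ`. Products are dense in `L²([0,1]^k)`, hence so is `S ⊔ N`,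
where `S` is the closed span of the first kind of products. Now `S ⊥ N`, since the inner product of
two products is the product of the inner products of their factors, and `f ⊥ N`: by symmetry the
factor in `Mᗮ` may be taken to be the last one, and by Fubini `⟪f, h ⊗ b⟫` is the inner product of
`h` with `y ↦ ∫ f(y, t) b(t) dt`, a function whose integral over every Borel set `A` is
`⟪(t ↦ ∫_A f(y, t) dy), b⟫ = 0`. Thus `f - P_S f ⊥ S ⊔ N`, i.e. `f = P_S f ∈ S`.
-/

open scoped InnerProductSpace RealInnerProductSpace

namespace MultilinearMap

variable {𝕜 ι E H : Type*} [RCLike 𝕜] [Fintype ι] [DecidableEq ι]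
  [NormedAddCommGroup E] [InnerProductSpace 𝕜 E] [NormedAddCommGroup H] [InnerProductSpace 𝕜 H]
  (T : MultilinearMap 𝕜 (fun _ : ι => E) H) (M : Submodule 𝕜 E) [M.HasOrthogonalProjection]

theorem apply_mem_span_sup_span (e : ι → E) :
    T e ∈ Submodule.span 𝕜 (T '' Set.univ.pi fun _ => (M : Set E)) ⊔
      Submodule.span 𝕜 (T '' {w | ∃ j, w j ∈ Mᗮ}) := by
  have hsplit : e = (fun i => M.starProjection (e i)) + fun i => e i - M.starProjection (e i) := by
    ext i; simp
  rw [hsplit, T.map_add_univ]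
  refine Submodule.sum_mem _ fun s _ => ?_
  by_cases hs : s = Finset.univ
  · subst hs
    refine Submodule.mem_sup_left (Submodule.subset_span ⟨_, fun i _ => ?_, rfl⟩)
    simp [M.starProjection_apply_mem]
  · obtain ⟨j, hj⟩ : ∃ j, j ∉ s := by simpa [Finset.eq_univ_iff_forall] using hs
    refine Submodule.mem_sup_right (Submodule.subset_span ⟨_, ⟨j, ?_⟩, rfl⟩)
    simp [hj, M.sub_starProjection_mem_orthogonal]

theorem mem_topologicalClosure_span_image_pi [CompleteSpace H]
    (hT : (Submodule.span 𝕜 (Set.range T)).topologicalClosure = ⊤)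
    (hTorth : ∀ u e j, (∀ i, u i ∈ M) → e j ∈ Mᗮ → ⟪T u, T e⟫_𝕜 = 0)
    {x : H} (hx : ∀ e j, e j ∈ Mᗮ → ⟪x, T e⟫_𝕜 = 0) :
    x ∈ (Submodule.span 𝕜 (T '' Set.univ.pi fun _ => (M : Set E))).topologicalClosure := by
  set S := (Submodule.span 𝕜 (T '' Set.univ.pi fun _ => (M : Set E))).topologicalClosure
  set N := Submodule.span 𝕜 (T '' {w | ∃ j, w j ∈ Mᗮ})
  have hSN : S ≤ Nᗮ := by
    refine Submodule.topologicalClosure_minimal _ (Submodule.isOrtho_iff_le.1 ?_)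
      (Submodule.isClosed_orthogonal N)
    rw [Submodule.isOrtho_span]
    rintro _ ⟨u, hu, rfl⟩ _ ⟨e, ⟨j, hj⟩, rfl⟩
    exact hTorth u e j (by simpa using hu) hj
  have hxN : x ∈ Nᗮ := by
    refine Submodule.isOrtho_iff_le.1 ?_ (Submodule.mem_span_singleton_self x)
    rw [Submodule.isOrtho_span]
    rintro _ rfl _ ⟨e, ⟨j, hj⟩, rfl⟩
    exact hx e j hj
  have hdense : (S ⊔ N)ᗮ = ⊥ := by
    rw [← Submodule.topologicalClosure_eq_top_iff, eq_top_iff, ← hT]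
    refine Submodule.topologicalClosure_mono (Submodule.span_le.2 ?_)
    rintro _ ⟨e, rfl⟩
    exact sup_le_sup_right (Submodule.le_topologicalClosure _) N (T.apply_mem_span_sup_span M e)
  have : CompleteSpace S := (Submodule.isClosed_topologicalClosure _).completeSpace_coe
  have hy : x - S.starProjection x ∈ (S ⊔ N)ᗮ := by
    rw [← Submodule.inf_orthogonal]
    exact ⟨S.sub_starProjection_mem_orthogonal x,
      Nᗮ.sub_mem hxN (hSN (S.starProjection_apply_mem x))⟩
  rw [hdense, Submodule.mem_bot, sub_eq_zero] at hy
  rw [hy]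
  exact S.starProjection_apply_mem x

end MultilinearMap

namespace MeasureTheory

theorem L2.real_inner_eq_integral {α : Type*} [MeasurableSpace α] {μ : Measure α}
    (f g : Lp ℝ 2 μ) : ⟪f, g⟫ = ∫ x, f x * g x ∂μ := by
  simp [L2.inner_def, mul_comm]

theorem ae_eq_zero_of_forall_setIntegral_isPiSystem {β E : Type*}
    [mβ : MeasurableSpace β] [NormedAddCommGroup E] [NormedSpace ℝ E] [CompleteSpace E]
    {ν : Measure β} {s : Set (Set β)} (h_eq : mβ = MeasurableSpace.generateFrom s)
    (h_inter : IsPiSystem s) {g : β → E} (hg : Integrable g ν) (h_univ : ∫ x, g x ∂ν = 0)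
    (h_basic : ∀ t ∈ s, ∫ x in t, g x ∂ν = 0) : g =ᵐ[ν] 0 := by
  have h_all : ∀ t, MeasurableSet t → ∫ x in t, g x ∂ν = 0 := by
    intro t ht
    induction t, ht using MeasurableSpace.induction_on_inter h_eq h_inter with
    | empty => simp
    | basic t ht => exact h_basic t ht
    | compl t ht ih => rw [setIntegral_compl ht hg, h_univ, ih, sub_zero]
    | iUnion t htd htm ih => simp [integral_iUnion htm htd hg.integrableOn, ih]
  exact hg.ae_eq_zero_of_forall_setIntegral_eq_zero fun t ht _ => h_all t ht

section PartialIntegral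

variable {α β : Type*} [MeasurableSpace α] [MeasurableSpace β] {μ : Measure α} {ν : Measure β}

theorem sq_integral_le_integral_sq [IsProbabilityMeasure ν] {g : β → ℝ} (hg : MemLp g 2 ν) :
    (∫ y, g y ∂ν) ^ 2 ≤ ∫ y, g y ^ 2 ∂ν := by
  have hvar := ProbabilityTheory.variance_nonneg g ν
  rw [ProbabilityTheory.variance_eq_sub hg] at hvar
  simpa using hvar

theorem MemLp.integral_prod_left_two [SFinite μ] [IsProbabilityMeasure ν] {F : α × β → ℝ}
    (hF : MemLp F 2 (μ.prod ν)) : MemLp (fun x => ∫ y, F (x, y) ∂ν) 2 μ := by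
  have hmeas := hF.aestronglyMeasurable.integral_prod_right'
  rw [memLp_two_iff_integrable_sq hmeas]
  refine hF.integrable_sq.integral_prod_left.mono' (hmeas.pow 2) ?_
  filter_upwards [hF.integrable_sq.prod_right_ae, hF.aestronglyMeasurable.prodMk_left]
    with x hint hmeas_x
  rw [Real.norm_eq_abs, abs_of_nonneg (sq_nonneg _)]
  exact sq_integral_le_integral_sq ((memLp_two_iff_integrable_sq hmeas_x).2 hint)

theorem MemLp.mul_prod_two [SFinite ν] {b : α → ℝ} {h : β → ℝ} (hb : MemLp b 2 μ)
    (hh : MemLp h 2 ν) : MemLp (fun z : α × β => b z.1 * h z.2) 2 (μ.prod ν) := by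
  have hmeas : AEStronglyMeasurable (fun z : α × β => b z.1 * h z.2) (μ.prod ν) :=
    (hb.aestronglyMeasurable.comp_quasiMeasurePreserving Measure.quasiMeasurePreserving_fst).mul
      (hh.aestronglyMeasurable.comp_quasiMeasurePreserving Measure.quasiMeasurePreserving_snd)
  rw [memLp_two_iff_integrable_sq hmeas]
  simpa [mul_pow] using hb.integrable_sq.mul_prod hh.integrable_sq

variable [SFinite μ] [IsFiniteMeasure ν] {F : α × β → ℝ} (hF : MemLp F 2 (μ.prod ν))
  {b : α → ℝ} (hb : MemLp b 2 μ)
include hF hb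

omit [SFinite μ] in
theorem integrable_mul_mul_prod {h : β → ℝ} (hh : MemLp h 2 ν) :
    Integrable (fun z => F z * (b z.1 * h z.2)) (μ.prod ν) :=
  hF.integrable_mul (hb.mul_prod_two hh)

theorem integral_mul_mul_prod_eq_integral_right {h : β → ℝ} (hh : MemLp h 2 ν) :
    ∫ z, F z * (b z.1 * h z.2) ∂(μ.prod ν) = ∫ y, (∫ x, F (x, y) * b x ∂μ) * h y ∂ν := by
  rw [integral_prod_symm _ (integrable_mul_mul_prod hF hb hh)]
  simp_rw [← integral_mul_const, mul_assoc]

theorem integral_mul_mul_prod_eq_integral_left {h : β → ℝ} (hh : MemLp h 2 ν) :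
    ∫ z, F z * (b z.1 * h z.2) ∂(μ.prod ν) = ∫ x, (∫ y, F (x, y) * h y ∂ν) * b x ∂μ := by
  rw [integral_prod _ (integrable_mul_mul_prod hF hb hh)]
  simp_rw [← integral_mul_const]
  congr with x; congr with y; ring

theorem integral_mul_mul_prod_eq_zero
    (hFb : ∀ A, MeasurableSet A → ∫ x, (∫ y in A, F (x, y) ∂ν) * b x ∂μ = 0)
    {h : β → ℝ} (hh : MemLp h 2 ν) : ∫ z, F z * (b z.1 * h z.2) ∂(μ.prod ν) = 0 := by
  set G := fun y => ∫ x, F (x, y) * b x ∂μ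
  have hG : Integrable G ν := (hF.integrable_mul (hb.comp_fst ν)).integral_prod_right
  have hG0 : G =ᵐ[ν] 0 := hG.ae_eq_zero_of_forall_setIntegral_eq_zero fun A hA _ => by
    have h1A : MemLp (A.indicator fun _ => (1 : ℝ)) 2 ν :=
      memLp_indicator_const 2 hA 1 (Or.inr (measure_ne_top ν A))
    have hind (g : β → ℝ) : ∫ y, g y * A.indicator (fun _ => 1) y ∂ν = ∫ y in A, g y ∂ν := by
      rw [← integral_indicator hA]
      congr with y
      by_cases hy : y ∈ A <;> simp [hy]
    rw [← hind, ← integral_mul_mul_prod_eq_integral_right hF hb h1A,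
      integral_mul_mul_prod_eq_integral_left hF hb h1A]
    simpa only [hind] using hFb A hA
  rw [integral_mul_mul_prod_eq_integral_right hF hb hh]
  exact integral_eq_zero_of_ae (by filter_upwards [hG0] with y hy; simp [G, hy])

end PartialIntegral

end MeasureTheory

section TensorProduct

variable {ι α : Type*} [Fintype ι] [MeasurableSpace α] {μ : Measure α} [SigmaFinite μ]

theorem memLp_two_prod_apply (e : ι → Lp ℝ 2 μ) :
    MemLp (fun x : ι → α => ∏ i, e i (x i)) 2 (Measure.pi fun _ => μ) := by
  have hmeas : AEStronglyMeasurable (fun x : ι → α => ∏ i, e i (x i)) (Measure.pi fun _ => μ) :=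
    Finset.aestronglyMeasurable_fun_prod _ fun i _ =>
      (Lp.aestronglyMeasurable (e i)).comp_quasiMeasurePreserving
        (Measure.quasiMeasurePreserving_eval _ i)
  rw [memLp_two_iff_integrable_sq hmeas]
  simpa [Finset.prod_pow] using
    Integrable.fintype_prod (f := fun i t => e i t ^ 2) fun i => (Lp.memLp (e i)).integrable_sq

omit [SigmaFinite μ] in
theorem prod_update_apply [DecidableEq ι] (e : ι → Lp ℝ 2 μ) (j : ι) (c : Lp ℝ 2 μ)
    (x : ι → α) :
    ∏ i, Function.update e j c i (x i) = c (x j) * ∏ i ∈ Finset.univ \ {j}, e i (x i) := by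
  rw [← Finset.prod_update_of_mem (Finset.mem_univ j) (fun i => e i (x i))]
  congr 1; ext i
  by_cases h : i = j <;> simp [h]

variable (ι μ) in
noncomputable def tprodL2 :
    MultilinearMap ℝ (fun _ : ι => Lp ℝ 2 μ) (Lp ℝ 2 (Measure.pi fun _ : ι => μ)) where
  toFun e := (memLp_two_prod_apply e).toLp _
  map_update_add' e j a b := by
    refine Lp.ext ?_
    filter_upwards [(memLp_two_prod_apply (Function.update e j (a + b))).coeFn_toLp,
      (memLp_two_prod_apply (Function.update e j a)).coeFn_toLp,
      (memLp_two_prod_apply (Function.update e j b)).coeFn_toLp,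
      Lp.coeFn_add ((memLp_two_prod_apply (Function.update e j a)).toLp _)
        ((memLp_two_prod_apply (Function.update e j b)).toLp _),
      (Lp.coeFn_add a b).comp_tendsto (Measure.tendsto_eval_ae_ae (i := j))]
      with x h h₁ h₂ h₃ hab
    simp only [Function.comp_apply, Function.eval, Pi.add_apply] at hab h₃
    rw [h, h₃, h₁, h₂, prod_update_apply, prod_update_apply, prod_update_apply, hab]
    ring
  map_update_smul' e j c a := by
    refine Lp.ext ?_
    filter_upwards [(memLp_two_prod_apply (Function.update e j (c • a))).coeFn_toLp,
      (memLp_two_prod_apply (Function.update e j a)).coeFn_toLp,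
      Lp.coeFn_smul c ((memLp_two_prod_apply (Function.update e j a)).toLp _),
      (Lp.coeFn_smul c a).comp_tendsto (Measure.tendsto_eval_ae_ae (i := j))] with x h h₁ h₂ hca
    simp only [Function.comp_apply, Function.eval, Pi.smul_apply, smul_eq_mul] at hca h₂
    rw [h, h₂, h₁, prod_update_apply, prod_update_apply, hca]
    ring

theorem coeFn_tprodL2 (e : ι → Lp ℝ 2 μ) :
    tprodL2 ι μ e =ᵐ[Measure.pi fun _ => μ] fun x => ∏ i, e i (x i) :=
  (memLp_two_prod_apply e).coeFn_toLp

theorem tprodL2_eq_iff {e : ι → Lp ℝ 2 μ} {g : Lp ℝ 2 (Measure.pi fun _ : ι => μ)} :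
    tprodL2 ι μ e = g ↔ g =ᵐ[Measure.pi fun _ => μ] fun x => ∏ i, e i (x i) :=
  ⟨fun h => h ▸ coeFn_tprodL2 e, fun h => Lp.ext ((coeFn_tprodL2 e).trans h.symm)⟩

theorem inner_tprodL2 (a b : ι → Lp ℝ 2 μ) :
    ⟪tprodL2 ι μ a, tprodL2 ι μ b⟫ = ∏ i, ⟪a i, b i⟫ := by
  simp_rw [L2.real_inner_eq_integral]
  rw [← integral_fintype_prod_eq_prod]
  refine integral_congr_ae ?_
  filter_upwards [coeFn_tprodL2 a, coeFn_tprodL2 b] with x ha hb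
  rw [ha, hb, Finset.prod_mul_distrib]

theorem inner_tprodL2_comp_perm {f : Lp ℝ 2 (Measure.pi fun _ : ι => μ)} (σ : Equiv.Perm ι)
    (hf : (fun x => f (x ∘ σ)) =ᵐ[Measure.pi fun _ => μ] f) (e : ι → Lp ℝ 2 μ) :
    ⟪f, tprodL2 ι μ (e ∘ σ)⟫ = ⟪f, tprodL2 ι μ e⟫ := by
  have hσ := measurePreserving_piCongrLeft (fun _ : ι => μ) σ.symm
  have hσ_apply (x : ι → α) : MeasurableEquiv.piCongrLeft (fun _ => α) σ.symm x = x ∘ σ := by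
    ext j; simp [MeasurableEquiv.coe_piCongrLeft, Equiv.piCongrLeft_apply_eq_cast]
  calc ⟪f, tprodL2 ι μ (e ∘ σ)⟫
      = ∫ x, f x * ∏ i, e (σ i) (x i) ∂(Measure.pi fun _ => μ) := by
        rw [L2.real_inner_eq_integral]
        exact integral_congr_ae (by filter_upwards [coeFn_tprodL2 (e ∘ σ)] with x hx; simp [hx])
    _ = ∫ x, f (x ∘ σ) * ∏ i, e (σ i) (x (σ i)) ∂(Measure.pi fun _ => μ) := by
        simpa [hσ_apply] using
          (hσ.integral_comp' fun x => f x * ∏ i, e (σ i) (x i)).symm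
    _ = ⟪f, tprodL2 ι μ e⟫ := by
        rw [L2.real_inner_eq_integral]
        refine integral_congr_ae ?_
        filter_upwards [hf, coeFn_tprodL2 e] with x hfx hx
        rw [hfx, hx, Equiv.prod_comp σ fun i => e i (x i)]

theorem inner_tprodL2_eq_zero_of_mem_of_mem_orthogonal {M : Submodule ℝ (Lp ℝ 2 μ)}
    {u e : ι → Lp ℝ 2 μ} {j : ι} (hu : ∀ i, u i ∈ M) (hj : e j ∈ Mᗮ) :
    ⟪tprodL2 ι μ u, tprodL2 ι μ e⟫ = 0 := by
  rw [inner_tprodL2]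
  exact Finset.prod_eq_zero (Finset.mem_univ j) (Submodule.inner_right_of_mem_orthogonal (hu j) hj)

variable [IsFiniteMeasure μ]

theorem indicatorConstLp_univ_pi_eq_tprodL2 {t : ι → Set α} (ht : ∀ i, MeasurableSet (t i)) :
    indicatorConstLp 2 (MeasurableSet.univ_pi ht) (measure_ne_top _ _) (1 : ℝ) =
      tprodL2 ι μ fun i => indicatorConstLp 2 (ht i) (measure_ne_top _ _) 1 := by
  refine (tprodL2_eq_iff.2 ?_).symm
  have hcoord : ∀ᵐ x ∂(Measure.pi fun _ => μ), ∀ i,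
      indicatorConstLp 2 (ht i) (measure_ne_top μ _) (1 : ℝ) (x i) =
        (t i).indicator (fun _ => 1) (x i) :=
    ae_all_iff.2 fun i => (indicatorConstLp_coeFn (p := 2) (hs := ht i) (hμs := measure_ne_top μ _)
      (c := (1 : ℝ))).comp_tendsto Measure.tendsto_eval_ae_ae
  filter_upwards [indicatorConstLp_coeFn (p := 2) (hs := MeasurableSet.univ_pi ht)
    (hμs := measure_ne_top _ _) (c := (1 : ℝ)), hcoord] with x hx hxi
  classical
  simp only [hx, hxi, Set.indicator_apply, Set.mem_univ_pi, Finset.prod_boole, Finset.mem_univ,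
    forall_const]

theorem topologicalClosure_span_range_tprodL2 :
    (Submodule.span ℝ (Set.range (tprodL2 ι μ))).topologicalClosure = ⊤ := by
  rw [Submodule.topologicalClosure_eq_top_iff, Submodule.eq_bot_iff]
  intro g hg
  have hbox : ∀ s ∈ Set.univ.pi '' Set.univ.pi fun _ : ι => {s : Set α | MeasurableSet s},
      ∫ x in s, g x ∂(Measure.pi fun _ => μ) = 0 := by
    rintro _ ⟨t, ht, rfl⟩
    have ht' : ∀ i, MeasurableSet (t i) := fun i => ht i (Set.mem_univ i)
    rw [← L2.inner_indicatorConstLp_one (MeasurableSet.univ_pi ht') (measure_ne_top _ _),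
      indicatorConstLp_univ_pi_eq_tprodL2 ht']
    exact Submodule.inner_right_of_mem_orthogonal (Submodule.subset_span (Set.mem_range_self _)) hg
  refine Lp.eq_zero_iff_ae_eq_zero.2 (ae_eq_zero_of_forall_setIntegral_isPiSystem
    generateFrom_pi.symm isPiSystem_pi ((Lp.memLp g).integrable one_le_two) ?_ hbox)
  simpa using hbox _ (Set.mem_image_of_mem _ (Set.mem_univ_pi.2 fun _ => MeasurableSet.univ))

end TensorProduct


instance : IsProbabilityMeasure unifI := ⟨by simp [unifI, Real.volume_Icc]⟩

instance (k : ℕ) : IsProbabilityMeasure (unifCube k) := by unfold unifCube; infer_instance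

section Marginal

variable {m : ℕ} (f : Lp ℝ 2 (unifCube (m + 1)))

instance : CompleteSpace (marginalSpace m f) :=
  (Submodule.isClosed_topologicalClosure _).completeSpace_coe

theorem measurePreserving_snoc :
    MeasurePreserving (fun z : ℝ × (Fin m → ℝ) => (Fin.snoc z.2 z.1 : Fin (m + 1) → ℝ))
      (unifI.prod (unifCube m)) (unifCube (m + 1)) := by
  have h := (measurePreserving_piFinSuccAbove (fun _ => unifI) (Fin.last m)).symm _
  have happly : ⇑(MeasurableEquiv.piFinSuccAbove (fun _ => ℝ) (Fin.last m)).symm =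
      fun z : ℝ × (Fin m → ℝ) => (Fin.snoc z.2 z.1 : Fin (m + 1) → ℝ) := by
    ext z : 1
    simp [MeasurableEquiv.piFinSuccAbove_symm_apply]
    rfl
  rwa [happly] at h

theorem integral_unifCube_succ (g : (Fin (m + 1) → ℝ) → ℝ) :
    ∫ x, g x ∂unifCube (m + 1) = ∫ z, g (Fin.snoc z.2 z.1) ∂(unifI.prod (unifCube m)) := by
  have h :=
    ((measurePreserving_piFinSuccAbove (fun _ => unifI) (Fin.last m)).symm _).integral_comp' g
  simp [MeasurableEquiv.piFinSuccAbove_symm_apply] at h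
  exact h.symm

theorem memLp_snoc :
    MemLp (fun z : ℝ × (Fin m → ℝ) => f (Fin.snoc z.2 z.1)) 2 (unifI.prod (unifCube m)) :=
  (Lp.memLp f).comp_measurePreserving measurePreserving_snoc

theorem memLp_marginal {A : Set (Fin m → ℝ)} (hA : MeasurableSet A) :
    MemLp (fun t => ∫ y in A, f (Fin.snoc y t) ∂unifCube m) 2 unifI := by
  convert ((memLp_snoc f).indicator (MeasurableSet.univ.prod hA)).integral_prod_left_two using 2
    with t
  rw [← integral_indicator hA]
  congr with y
  by_cases hy : y ∈ A <;> simp [hy]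

theorem marginal_mem_marginalSpace {A : Set (Fin m → ℝ)} (hA : MeasurableSet A) :
    (memLp_marginal f hA).toLp _ ∈ marginalSpace m f :=
  Submodule.le_topologicalClosure _
    (Submodule.subset_span ⟨A, hA, (memLp_marginal f hA).coeFn_toLp⟩)

theorem inner_tprodL2_eq_zero_of_last_mem_orthogonal (e : Fin (m + 1) → Lp ℝ 2 unifI)
    (he : e (Fin.last m) ∈ (marginalSpace m f)ᗮ) : ⟪f, tprodL2 _ unifI e⟫ = 0 := by
  have hmarg (A : Set (Fin m → ℝ)) (hA : MeasurableSet A) :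
      ∫ t, (∫ y in A, f (Fin.snoc y t) ∂unifCube m) * e (Fin.last m) t ∂unifI = 0 := by
    rw [← Submodule.inner_right_of_mem_orthogonal (marginal_mem_marginalSpace f hA) he,
      L2.real_inner_eq_integral]
    exact integral_congr_ae <| by
      filter_upwards [(memLp_marginal f hA).coeFn_toLp] with t ht
      rw [ht]
  calc ⟪f, tprodL2 _ unifI e⟫
      = ∫ z, f (Fin.snoc z.2 z.1) * (e (Fin.last m) z.1 *
          tprodL2 _ unifI (fun i => e i.castSucc) z.2) ∂(unifI.prod (unifCube m)) := by
        -- `unifCube` is not reducible, so both coercions are taken in the type of `tprodL2`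
        refine (L2.real_inner_eq_integral (μ := Measure.pi fun _ => unifI) f _).trans <|
          (integral_unifCube_succ _).trans <| integral_congr_ae ?_
        filter_upwards
          [(coeFn_tprodL2 e).comp_tendsto measurePreserving_snoc.quasiMeasurePreserving.tendsto_ae,
            (coeFn_tprodL2 _).comp_tendsto Measure.quasiMeasurePreserving_snd.tendsto_ae]
          with z h1 h2
        simp only [Function.comp_apply] at h1 h2
        rw [h1, h2, Fin.prod_univ_castSucc]
        simp only [Fin.snoc_castSucc, Fin.snoc_last]
        exact congrArg _ (mul_comm _ _)
    _ = 0 := integral_mul_mul_prod_eq_zero (memLp_snoc f) (Lp.memLp _) hmarg (Lp.memLp _)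

theorem inner_tprodL2_eq_zero_of_mem_orthogonal
    (hsym : ∀ σ : Equiv.Perm (Fin (m + 1)),
      (fun x : Fin (m + 1) → ℝ => f (x ∘ σ)) =ᵐ[unifCube (m + 1)] f)
    (e : Fin (m + 1) → Lp ℝ 2 unifI) (j : Fin (m + 1)) (he : e j ∈ (marginalSpace m f)ᗮ) :
    ⟪f, tprodL2 _ unifI e⟫ = 0 :=
  (inner_tprodL2_comp_perm (Equiv.swap j (Fin.last m)) (hsym _) e).symm.trans
    (inner_tprodL2_eq_zero_of_last_mem_orthogonal f _ (by simpa using he))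

end Marginal

/-- A symmetric `f ∈ L²([0,1]^k)` belongs to the closed tensor power `H_f^{⊗k}`,
i.e. to the closed span of products `e₁ ⊗ ⋯ ⊗ e_k` with each `e_i ∈ H_f`. -/
theorem symmetric_mem_marginal_tensor_power
    (m : ℕ) (f : Lp ℝ 2 (unifCube (m + 1)))
    (hsym : ∀ σ : Equiv.Perm (Fin (m + 1)),
      (fun x : Fin (m + 1) → ℝ => f (x ∘ σ)) =ᵐ[unifCube (m + 1)] f) :
    f ∈ (Submodule.span ℝ {g : Lp ℝ 2 (unifCube (m + 1)) |
        ∃ e : Fin (m + 1) → Lp ℝ 2 unifI, (∀ i, e i ∈ marginalSpace m f) ∧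
          (g : (Fin (m + 1) → ℝ) → ℝ) =ᵐ[unifCube (m + 1)]
            fun x => ∏ i, e i (x i)}).topologicalClosure := by
  have hset : {g : Lp ℝ 2 (unifCube (m + 1)) |
        ∃ e : Fin (m + 1) → Lp ℝ 2 unifI, (∀ i, e i ∈ marginalSpace m f) ∧
          (g : (Fin (m + 1) → ℝ) → ℝ) =ᵐ[unifCube (m + 1)] fun x => ∏ i, e i (x i)} =
      tprodL2 _ unifI '' Set.univ.pi fun _ => (marginalSpace m f : Set (Lp ℝ 2 unifI)) := by
    ext g
    exact ⟨fun ⟨e, he, hg⟩ => ⟨e, fun i _ => he i, tprodL2_eq_iff.2 hg⟩,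
      fun ⟨e, he, hg⟩ => ⟨e, fun i => he i (Set.mem_univ i), tprodL2_eq_iff.1 hg⟩⟩
  rw [hset]
  exact (tprodL2 _ unifI).mem_topologicalClosure_span_image_pi _
    topologicalClosure_span_range_tprodL2
    (fun _ _ _ => inner_tprodL2_eq_zero_of_mem_of_mem_orthogonal)
    (inner_tprodL2_eq_zero_of_mem_orthogonal f hsym)
end

section
/- Let S be a d×d symmetric positive definite matrix with diagonal part Z = Diag(S_{ii}), and suppose Z < I_d and Z + S < 2 I_d (in the Loewner order). Then Σ := I_d - (1/2)(I_d - Z)^{-1/2}(S - Z)(I_d - Z)^{-1/2} is symmetric positive definite with Σ_{ii} = 1 for every i. -/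
open Matrix

/-!
Writing `D = (I - Z)^{-1/2}`, we have `D (I - Z) D = I`, hence
`Σ = I - ½ D (S - Z) D = ½ D (2I - Z - S) D`, a congruence of the positive definite matrix
`2I - (Z + S)` by an invertible diagonal matrix. The diagonal of `S - Z` vanishes, so
`Σ_ii = 1`.
-/

lemma Real.inv_sqrt_mul_mul_inv_sqrt {x : ℝ} (hx : 0 < x) : (√x)⁻¹ * x * (√x)⁻¹ = 1 := by
  have hsqrt : √x ≠ 0 := (Real.sqrt_pos.mpr hx).ne'
  field_simp
  exact (Real.sq_sqrt hx.le).symm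

namespace Matrix

variable {n : Type*} [Fintype n] [DecidableEq n]

lemma one_sub_smul_diagonal_mul_sub_diag_mul_diagonal_apply_self (c : ℝ) (f g : n → ℝ)
    (S : Matrix n n ℝ) (i : n) :
    (1 - c • (diagonal f * (S - diagonal fun j => S j j) * diagonal g)) i i = 1 := by
  simp [mul_diagonal, diagonal_mul]

lemma one_sub_half_smul_diagonal_conj_eq {z f : n → ℝ} (hf : ∀ i, f i * (1 - z i) * f i = 1)
    (S : Matrix n n ℝ) :
    1 - (2⁻¹ : ℝ) • (diagonal f * (S - diagonal z) * diagonal f) =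
      (2⁻¹ : ℝ) • (diagonal f * ((2 : ℝ) • 1 - (diagonal z + S)) * diagonal f) := by
  ext i j
  rcases eq_or_ne i j with rfl | hij
  · have := hf i
    simp only [sub_apply, smul_apply, mul_diagonal, diagonal_mul, one_apply_eq, add_apply,
      diagonal_apply_eq, smul_eq_mul]
    linarith
  · simp [mul_diagonal, diagonal_mul, one_apply_ne hij, diagonal_apply_ne _ hij]

lemma PosDef.diagonal_mul_mul_diagonal {A : Matrix n n ℝ} (hA : A.PosDef) {f : n → ℝ}
    (hf : ∀ i, f i ≠ 0) : (diagonal f * A * diagonal f).PosDef := by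
  have hinj : Function.Injective (diagonal f).mulVec :=
    mulVec_injective_iff_isUnit.mpr (isUnit_diagonal.mpr (Pi.isUnit_iff.mpr fun i => (hf i).isUnit))
  simpa using hA.conjTranspose_mul_mul_same hinj

end Matrix

theorem sigma_posDef_unit_diagonal_general
    (d : ℕ) (S : Matrix (Fin d) (Fin d) ℝ)
    (hZ : (1 - Matrix.diagonal (fun i => S i i)).PosDef)
    (hZS : ((2 : ℝ) • (1 : Matrix (Fin d) (Fin d) ℝ) -
      (Matrix.diagonal (fun i => S i i) + S)).PosDef) :
    ((1 : Matrix (Fin d) (Fin d) ℝ) -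
        (2⁻¹ : ℝ) • (Matrix.diagonal (fun i => (Real.sqrt (1 - S i i))⁻¹) *
          (S - Matrix.diagonal fun i => S i i) *
          Matrix.diagonal fun i => (Real.sqrt (1 - S i i))⁻¹)).PosDef ∧
      ∀ i, ((1 : Matrix (Fin d) (Fin d) ℝ) -
        (2⁻¹ : ℝ) • (Matrix.diagonal (fun i => (Real.sqrt (1 - S i i))⁻¹) *
          (S - Matrix.diagonal fun i => S i i) *
          Matrix.diagonal fun i => (Real.sqrt (1 - S i i))⁻¹)) i i = 1 := by
  have hpos : ∀ i, 0 < 1 - S i i := by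
    rwa [← diagonal_one, diagonal_sub, posDef_diagonal_iff] at hZ
  refine ⟨?_, one_sub_smul_diagonal_mul_sub_diag_mul_diagonal_apply_self _ _ _ S⟩
  rw [one_sub_half_smul_diagonal_conj_eq fun i => Real.inv_sqrt_mul_mul_inv_sqrt (hpos i)]
  refine (hZS.diagonal_mul_mul_diagonal fun i => ?_).smul (by norm_num)
  exact inv_ne_zero (Real.sqrt_pos.mpr (hpos i)).ne'

/-- If `S` is symmetric positive definite with diagonal `Z`, `Z < I` and `Z + S < 2I`
(Loewner order), then `Σ = I - (1/2)(I-Z)^{-1/2}(S-Z)(I-Z)^{-1/2}` is symmetric positive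
definite with unit diagonal. -/
theorem sigma_posDef_unit_diagonal
    (d : ℕ) (S : Matrix (Fin d) (Fin d) ℝ) (hS : S.PosDef)
    (hZ : (1 - Matrix.diagonal (fun i => S i i)).PosDef)
    (hZS : ((2 : ℝ) • (1 : Matrix (Fin d) (Fin d) ℝ) -
      (Matrix.diagonal (fun i => S i i) + S)).PosDef) :
    ((1 : Matrix (Fin d) (Fin d) ℝ) -
        (2⁻¹ : ℝ) • (Matrix.diagonal (fun i => (Real.sqrt (1 - S i i))⁻¹) *
          (S - Matrix.diagonal fun i => S i i) *
          Matrix.diagonal fun i => (Real.sqrt (1 - S i i))⁻¹)).PosDef ∧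
      ∀ i, ((1 : Matrix (Fin d) (Fin d) ℝ) -
        (2⁻¹ : ℝ) • (Matrix.diagonal (fun i => (Real.sqrt (1 - S i i))⁻¹) *
          (S - Matrix.diagonal fun i => S i i) *
          Matrix.diagonal fun i => (Real.sqrt (1 - S i i))⁻¹)) i i = 1 :=
  sigma_posDef_unit_diagonal_general d S hZ hZS
end
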